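/- arXiv:2505.08342 — 12 statements merged into one kernel-verified Lean document; each statement's English description precedes it below -/
import Mathlib

section
/- Let n ≥ 1 be an integer, let w_1, …, w_n be real numbers, and let p, q be reals with 0 < p ≤ 1 and 0 ≤ q ≤ p. Then ∑_{k=1}^n C(n−1, k−1) · p^{k−1} (1−p)^{n−k} · ( ∑_{l=1}^{k} w_l · C(k−1, l−1) · (q/p)^{l−1} (1 − q/p)^{k−l} ) = ∑_{k=1}^n w_k · C(n−1, k−1) · q^{k−1} (1−q)^{n−k}. (This is Lemma 3 of the paper: when the number of competitors k−1 is binomially distributed B(n−1, p), the expectation over k of the k-participant interim prize at conditional quantile q/p equals the n-participant interim allocation at q.) -/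
open Finset

private lemma core_lemma (m : ℕ) (w : ℕ → ℝ) (p q : ℝ) (hp : p ≠ 0) :
    ∑ j ∈ range (m+1), (Nat.choose m j : ℝ) * p^j * (1-p)^(m-j) *
      (∑ i ∈ range (j+1), w i * (Nat.choose j i : ℝ) * (q/p)^i * (1 - q/p)^(j-i))
    = ∑ i ∈ range (m+1), w i * (Nat.choose m i : ℝ) * q^i * (1-q)^(m-i) := by
  have step1 : ∀ j ∈ range (m+1),
      (Nat.choose m j : ℝ) * p^j * (1-p)^(m-j) *
        (∑ i ∈ range (j+1), w i * (Nat.choose j i : ℝ) * (q/p)^i * (1 - q/p)^(j-i))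
      = ∑ i ∈ range (j+1), w i * ((Nat.choose m j : ℝ) * (Nat.choose j i : ℝ))
          * q^i * (p-q)^(j-i) * (1-p)^(m-j) := by
    intro j _
    rw [Finset.mul_sum]
    refine Finset.sum_congr rfl fun i hi => ?_
    have hij : i ≤ j := Nat.lt_succ_iff.mp (Finset.mem_range.mp hi)
    have hpj : p^j = p^i * p^(j-i) := by
      rw [← pow_add, Nat.add_sub_cancel' hij]
    have h1 : (q/p)^i * p^i = q^i := by
      rw [div_pow, div_mul_cancel₀ _ (pow_ne_zero _ hp)]
    have h2 : (1 - q/p)^(j-i) * p^(j-i) = (p-q)^(j-i) := by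
      rw [← mul_pow]
      congr 1
      field_simp
    rw [hpj]
    calc (Nat.choose m j : ℝ) * (p^i * p^(j-i)) * (1-p)^(m-j) *
          (w i * (Nat.choose j i : ℝ) * (q/p)^i * (1 - q/p)^(j-i))
        = w i * ((Nat.choose m j : ℝ) * (Nat.choose j i : ℝ))
            * ((q/p)^i * p^i) * ((1 - q/p)^(j-i) * p^(j-i)) * (1-p)^(m-j) := by ring
      _ = _ := by rw [h1, h2]
  rw [Finset.sum_congr rfl step1]
  rw [Finset.sum_comm' (t' := range (m+1)) (s' := fun i => Finset.Icc i m)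
      (by intro j i; simp only [Finset.mem_range, Finset.mem_Icc]; omega)]
  refine Finset.sum_congr rfl fun i hi => ?_
  have him : i ≤ m := Nat.lt_succ_iff.mp (Finset.mem_range.mp hi)
  have hre : ∑ j ∈ Finset.Icc i m, w i * ((Nat.choose m j : ℝ) * (Nat.choose j i : ℝ))
      * q^i * (p-q)^(j-i) * (1-p)^(m-j)
      = ∑ t ∈ range (m-i+1), w i * ((Nat.choose m i : ℝ) * (Nat.choose (m-i) t : ℝ))
          * q^i * (p-q)^t * (1-p)^((m-i)-t) := by
    rw [← Finset.Ico_add_one_right_eq_Icc, Finset.sum_Ico_eq_sum_range]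
    have : m + 1 - i = m - i + 1 := by omega
    rw [this]
    refine Finset.sum_congr rfl fun t ht => ?_
    have htm : t ≤ m - i := Nat.lt_succ_iff.mp (Finset.mem_range.mp ht)
    have h4 : i + t - i = t := by omega
    have h5 : m - (i + t) = (m - i) - t := by omega
    have h3 : (Nat.choose m (i+t) : ℝ) * (Nat.choose (i+t) i : ℝ)
        = (Nat.choose m i : ℝ) * (Nat.choose (m-i) t : ℝ) := by
      rw [← Nat.cast_mul, Nat.choose_mul (Nat.le_add_right i t), h4, Nat.cast_mul]
    rw [h4, h5, h3]
  rw [hre]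
  have hbin : ∑ t ∈ range (m-i+1), (Nat.choose (m-i) t : ℝ) * (p-q)^t * (1-p)^((m-i)-t)
      = (1-q)^(m-i) := by
    have := add_pow (p-q) (1-p) (m-i)
    have heq : p - q + (1 - p) = 1 - q := by ring
    rw [heq] at this
    rw [this]
    refine Finset.sum_congr rfl fun t _ => ?_
    ring
  calc ∑ t ∈ range (m-i+1), w i * ((Nat.choose m i : ℝ) * (Nat.choose (m-i) t : ℝ))
        * q^i * (p-q)^t * (1-p)^((m-i)-t)
      = w i * (Nat.choose m i : ℝ) * q^i *
          ∑ t ∈ range (m-i+1), (Nat.choose (m-i) t : ℝ) * (p-q)^t * (1-p)^((m-i)-t) := by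
        rw [Finset.mul_sum]; exact Finset.sum_congr rfl fun t _ => by ring
    _ = w i * (Nat.choose m i : ℝ) * q^i * (1-q)^(m-i) := by rw [hbin]

/-- Lemma 3 of the paper: when the number of competitors `k-1` is binomially
distributed `B(n-1, p)`, the expectation over `k` of the `k`-participant interim
prize at conditional quantile `q/p` equals the `n`-participant interim allocation
at `q`. Prizes `w` are 1-indexed. -/
theorem expected_interim_allocation_disclosed_competitors
    (n : ℕ) (hn : 1 ≤ n) (w : ℕ → ℝ) (p q : ℝ)
    (hp0 : 0 < p) (hp1 : p ≤ 1) (hq0 : 0 ≤ q) (hqp : q ≤ p) :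
    ∑ k ∈ Finset.Icc 1 n, (Nat.choose (n-1) (k-1) : ℝ) * p^(k-1) * (1-p)^(n-k) *
      (∑ l ∈ Finset.Icc 1 k,
        w l * (Nat.choose (k-1) (l-1) : ℝ) * (q/p)^(l-1) * (1 - q/p)^(k-l))
    = ∑ k ∈ Finset.Icc 1 n,
        w k * (Nat.choose (n-1) (k-1) : ℝ) * q^(k-1) * (1-q)^(n-k) := by
  obtain ⟨m, rfl⟩ : ∃ m, n = m + 1 := ⟨n - 1, by omega⟩
  have key := core_lemma m (fun i => w (i+1)) p q hp0.ne'
  rw [show Finset.Icc 1 (m+1) = Finset.Ico 1 (m+2) from (Finset.Ico_add_one_right_eq_Icc 1 (m+1)).symm,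
    Finset.sum_Ico_eq_sum_range, Finset.sum_Ico_eq_sum_range,
    show m + 2 - 1 = m + 1 from rfl]
  simp only [Nat.add_sub_cancel]
  refine Eq.trans (Finset.sum_congr rfl fun k hk => ?_)
    (key.trans (Finset.sum_congr rfl fun k hk => ?_))
  · have e1 : 1 + k - 1 = k := by omega
    have e2 : m + 1 - (1 + k) = m - k := by omega
    rw [e1, e2]
    congr 1
    rw [show Finset.Icc 1 (1+k) = Finset.Ico 1 (1+k+1) from (Finset.Ico_add_one_right_eq_Icc 1 (1+k)).symm,
      Finset.sum_Ico_eq_sum_range, show 1 + k + 1 - 1 = k + 1 from by omega]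
    refine Finset.sum_congr rfl fun i _ => ?_
    rw [show 1 + i - 1 = i from by omega, show 1 + k - (1 + i) = k - i from by omega,
      Nat.add_comm 1 i]
  · have e1 : 1 + k - 1 = k := by omega
    have e2 : m + 1 - (1 + k) = m - k := by omega
    rw [e1, e2, Nat.add_comm 1 k]
end

section
/- Let n ≥ 1 and let w = (w_1, …, w_n) be a prize structure of length n. If w_1 > w_n, then the interim allocation function x_w is strictly decreasing on [0,1]. If w_1 = w_n, then x_w is constant on [0,1] with value w_1. -/
/-- The interim allocation function of a prize vector `w` (1-indexed) with `n`
participants: `x_w(φ) = ∑_{k=1}^n w_k · C(n−1, k−1) · φ^{k−1} (1−φ)^{n−k}`. -/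
noncomputable def interimAlloc (n : ℕ) (w : ℕ → ℝ) (φ : ℝ) : ℝ :=
  ∑ k ∈ Finset.Icc 1 n, w k * (Nat.choose (n-1) (k-1) : ℝ) * φ^(k-1) * (1-φ)^(n-k)

/-- `w` (1-indexed) is a prize structure of length `n`:
`w_1 ≥ w_2 ≥ ⋯ ≥ w_n ≥ 0`. -/
def IsPrizeStructure (n : ℕ) (w : ℕ → ℝ) : Prop :=
  (∀ k, 1 ≤ k → k < n → w (k+1) ≤ w k) ∧ 0 ≤ w n

lemma interim_eq (m : ℕ) (w : ℕ → ℝ) (φ : ℝ) :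
    interimAlloc (m+1) w φ
      = ∑ i ∈ Finset.range (m+1), w (i+1) * (Nat.choose m i : ℝ) * φ^i * (1-φ)^(m-i) := by
  unfold interimAlloc
  rw [← Finset.Ico_add_one_right_eq_Icc, Finset.sum_Ico_eq_sum_range]
  apply Finset.sum_congr (by norm_num)
  intro i _
  have h1 : 1 + i - 1 = i := by omega
  have h2 : m + 1 - (1 + i) = m - i := by omega
  have h3 : m + 1 - 1 = m := by omega
  rw [h1, h2, h3, add_comm 1 i]

lemma hasDerivAt_term (a b : ℕ) (φ : ℝ) :
    HasDerivAt (fun x : ℝ => x^a * (1-x)^b)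
      ((a:ℝ) * φ^(a-1) * (1-φ)^b - (b:ℝ) * φ^a * (1-φ)^(b-1)) φ := by
  have h1 : HasDerivAt (fun x : ℝ => x^a) ((a:ℝ) * φ^(a-1)) φ := hasDerivAt_pow a φ
  have h2 : HasDerivAt (fun x : ℝ => (1-x)^b) ((b:ℝ) * (1-φ)^(b-1) * (0-1)) φ :=
    (hasDerivAt_pow b (1-φ)).comp φ ((hasDerivAt_const φ 1).sub (hasDerivAt_id φ))
  have := h1.mul h2
  refine this.congr_deriv (Eq.symm ?_)
  ring

noncomputable def Dfun (m : ℕ) (w : ℕ → ℝ) (φ : ℝ) : ℝ :=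
  ∑ i ∈ Finset.range m,
    (((m-i) * Nat.choose m i : ℕ) : ℝ) * (w (i+2) - w (i+1)) * φ^i * (1-φ)^(m-1-i)

lemma hasDerivAt_interim (m : ℕ) (w : ℕ → ℝ) (φ : ℝ) :
    HasDerivAt (interimAlloc (m+1) w) (Dfun m w φ) φ := by
  have hre : interimAlloc (m+1) w
      = fun x => ∑ i ∈ Finset.range (m+1),
          w (i+1) * (Nat.choose m i : ℝ) * (x^i * (1-x)^(m-i)) := by
    funext x
    rw [interim_eq]
    exact Finset.sum_congr rfl (fun i _ => by ring)
  rw [hre]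
  have hterm : ∀ i ∈ Finset.range (m+1),
      HasDerivAt (fun x : ℝ => w (i+1) * (Nat.choose m i : ℝ) * (x^i * (1-x)^(m-i)))
        (w (i+1) * (Nat.choose m i : ℝ) *
          ((i:ℝ) * φ^(i-1) * (1-φ)^(m-i) - ((m-i : ℕ):ℝ) * φ^i * (1-φ)^(m-i-1))) φ := by
    intro i _
    exact (hasDerivAt_term i (m-i) φ).const_mul _
  have hsum := HasDerivAt.fun_sum hterm
  refine hsum.congr_deriv (Eq.symm ?_)
  -- algebraic identity
  have expand : ∀ i ∈ Finset.range (m+1),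
      w (i+1) * (Nat.choose m i : ℝ) *
          ((i:ℝ) * φ^(i-1) * (1-φ)^(m-i) - ((m-i : ℕ):ℝ) * φ^i * (1-φ)^(m-i-1))
        = (w (i+1) * (Nat.choose m i : ℝ) * ((i:ℝ) * φ^(i-1) * (1-φ)^(m-i)))
          - (w (i+1) * (Nat.choose m i : ℝ) * (((m-i : ℕ):ℝ) * φ^i * (1-φ)^(m-i-1))) := by
    intro i _; ring
  rw [Finset.sum_congr rfl expand, Finset.sum_sub_distrib]
  have hS1 : ∑ i ∈ Finset.range (m+1),
      w (i+1) * (Nat.choose m i : ℝ) * ((i:ℝ) * φ^(i-1) * (1-φ)^(m-i))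
      = ∑ i ∈ Finset.range m,
        w (i+2) * (Nat.choose m (i+1) : ℝ) * (((i:ℝ)+1) * φ^i * (1-φ)^(m-(i+1))) := by
    rw [Finset.sum_range_succ']
    simp
  have hS2 : ∑ i ∈ Finset.range (m+1),
      w (i+1) * (Nat.choose m i : ℝ) * (((m-i : ℕ):ℝ) * φ^i * (1-φ)^(m-i-1))
      = ∑ i ∈ Finset.range m,
        w (i+1) * (Nat.choose m i : ℝ) * (((m-i : ℕ):ℝ) * φ^i * (1-φ)^(m-i-1)) := by
    rw [Finset.sum_range_succ]
    simp
  rw [hS1, hS2, ← Finset.sum_sub_distrib]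
  apply Finset.sum_congr rfl
  intro i hi
  have him : i < m := Finset.mem_range.mp hi
  have keyR : (Nat.choose m (i+1) : ℝ) * ((i:ℝ)+1)
      = (Nat.choose m i : ℝ) * ((m-i : ℕ):ℝ) := by
    exact_mod_cast congrArg (Nat.cast (R := ℝ)) (Nat.choose_succ_right_eq m i)
  have e1 : m - (i+1) = m - 1 - i := by omega
  have e2 : m - i - 1 = m - 1 - i := by omega
  rw [e1, e2]
  have ecast : (((m-i) * Nat.choose m i : ℕ) : ℝ) = ((m-i : ℕ):ℝ) * (Nat.choose m i : ℝ) := by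
    push_cast; ring
  rw [ecast]
  linear_combination (-(φ^i * (1-φ)^(m-1-i) * w (i+2))) * keyR

lemma w_anti (n : ℕ) (w : ℕ → ℝ) (hw : IsPrizeStructure n w) :
    ∀ j k, 1 ≤ j → j ≤ k → k ≤ n → w k ≤ w j := by
  intro j k hj hjk hkn
  induction k with
  | zero => omega
  | succ k ih =>
    rcases Nat.eq_or_lt_of_le hjk with h | h
    · rw [h]
    · have hk : j ≤ k := by omega
      have h1 : 1 ≤ k := by omega
      exact le_trans (hw.1 k h1 (by omega)) (ih hk (by omega))

lemma w_const (n : ℕ) (w : ℕ → ℝ) (hw : IsPrizeStructure n w) (heq : w 1 = w n) :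
    ∀ k, 1 ≤ k → k ≤ n → w k = w 1 := by
  intro k h1 h2
  have ha := w_anti n w hw 1 k le_rfl h1 h2
  have hb := w_anti n w hw k n h1 h2 le_rfl
  rw [← heq] at hb
  linarith

/-- If `w_1 > w_n` then the interim allocation function is strictly decreasing
on `[0,1]`; if `w_1 = w_n` then it is constant on `[0,1]` with value `w_1`. -/
theorem interimAlloc_strictAnti_or_const
    (n : ℕ) (hn : 1 ≤ n) (w : ℕ → ℝ) (hw : IsPrizeStructure n w) :
    (w n < w 1 → StrictAntiOn (interimAlloc n w) (Set.Icc 0 1)) ∧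
    (w 1 = w n → ∀ φ ∈ Set.Icc (0:ℝ) 1, interimAlloc n w φ = w 1) := by
  obtain ⟨m, rfl⟩ : ∃ m, n = m + 1 := ⟨n - 1, by omega⟩
  constructor
  · -- strictly decreasing case
    intro hlt
    apply strictAntiOn_of_deriv_neg (convex_Icc 0 1)
    · have : Differentiable ℝ (interimAlloc (m+1) w) :=
        fun x => (hasDerivAt_interim m w x).differentiableAt
      exact this.continuous.continuousOn
    · intro x hx
      rw [interior_Icc] at hx
      rw [(hasDerivAt_interim m w x).deriv]
      -- show Dfun < 0
      obtain ⟨j, hjm, hj⟩ : ∃ j, j < m ∧ w (j+2) < w (j+1) := by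
        by_contra hcon
        push_neg at hcon
        have hall : ∀ k, k ≤ m → w (k+1) = w 1 := by
          intro k hk
          induction k with
          | zero => rfl
          | succ k ih =>
            have h1 : w (k+2) ≤ w (k+1) := hw.1 (k+1) (by omega) (by omega)
            have h2 : w (k+1) ≤ w (k+2) := hcon k (by omega)
            rw [← ih (by omega)]; linarith
        have := hall m le_rfl
        rw [this] at hlt
        exact lt_irrefl _ hlt
      have hx0 : (0:ℝ) < x := hx.1
      have hx1 : (0:ℝ) < 1 - x := by linarith [hx.2]
      have hle : ∀ i ∈ Finset.range m,
          (((m-i) * Nat.choose m i : ℕ) : ℝ) * (w (i+2) - w (i+1)) * x^i * (1-x)^(m-1-i)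
            ≤ (0 : ℝ) := by
        intro i hi
        have hc : (0:ℝ) ≤ (((m-i) * Nat.choose m i : ℕ) : ℝ) := Nat.cast_nonneg _
        have hd : w (i+2) - w (i+1) ≤ 0 := by
          have := hw.1 (i+1) (by omega) (by
            have := Finset.mem_range.mp hi; omega)
          linarith
        have hp1 : (0:ℝ) < x^i := pow_pos hx0 i
        have hp2 : (0:ℝ) < (1-x)^(m-1-i) := pow_pos hx1 _
        have : (((m-i) * Nat.choose m i : ℕ) : ℝ) * (w (i+2) - w (i+1)) ≤ 0 :=
          mul_nonpos_of_nonneg_of_nonpos hc hd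
        have h3 : (((m-i) * Nat.choose m i : ℕ) : ℝ) * (w (i+2) - w (i+1)) * x^i ≤ 0 :=
          mul_nonpos_of_nonpos_of_nonneg this hp1.le
        exact mul_nonpos_of_nonpos_of_nonneg h3 hp2.le
      have hstrict :
          (((m-j) * Nat.choose m j : ℕ) : ℝ) * (w (j+2) - w (j+1)) * x^j * (1-x)^(m-1-j)
            < (0 : ℝ) := by
        have hc : (0:ℝ) < (((m-j) * Nat.choose m j : ℕ) : ℝ) := by
          have h1 : 0 < m - j := by omega
          have h2 : 0 < Nat.choose m j := Nat.choose_pos (by omega)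
          exact_mod_cast Nat.mul_pos h1 h2
        have hd : w (j+2) - w (j+1) < 0 := by linarith
        have hp1 : (0:ℝ) < x^j := pow_pos hx0 j
        have hp2 : (0:ℝ) < (1-x)^(m-1-j) := pow_pos hx1 _
        have h3 : (((m-j) * Nat.choose m j : ℕ) : ℝ) * (w (j+2) - w (j+1)) < 0 :=
          mul_neg_of_pos_of_neg hc hd
        have h4 := mul_neg_of_neg_of_pos h3 hp1
        exact mul_neg_of_neg_of_pos h4 hp2
      have := Finset.sum_lt_sum hle ⟨j, Finset.mem_range.mpr hjm, hstrict⟩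
      simpa [Dfun] using this
  · -- constant case
    intro heq φ _
    rw [interim_eq]
    have hconst : ∀ i ∈ Finset.range (m+1),
        w (i+1) * (Nat.choose m i : ℝ) * φ^i * (1-φ)^(m-i)
          = w 1 * ((Nat.choose m i : ℝ) * φ^i * (1-φ)^(m-i)) := by
      intro i hi
      rw [w_const (m+1) w hw heq (i+1) (by omega) (by
        have := Finset.mem_range.mp hi; omega)]
      ring
    rw [Finset.sum_congr rfl hconst, ← Finset.mul_sum]
    have hbin : ∑ i ∈ Finset.range (m+1), (Nat.choose m i : ℝ) * φ^i * (1-φ)^(m-i) = 1 := by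
      have h := add_pow φ (1-φ) m
      have h2 : (φ + (1-φ)) ^ m = 1 := by norm_num
      rw [h2] at h
      have h3 : ∑ i ∈ Finset.range (m+1), (Nat.choose m i : ℝ) * φ^i * (1-φ)^(m-i)
          = ∑ i ∈ Finset.range (m+1), φ^i * (1-φ)^(m-i) * (Nat.choose m i : ℝ) :=
        Finset.sum_congr rfl (fun i _ => by ring)
      rw [h3, ← h]
    rw [hbin, mul_one]
end

section
/- Let n ≥ 1 be an integer and w_1, …, w_n arbitrary real numbers, with the convention w_{n+1} := 0. For all φ ∈ [0,1]: ∑_{k=1}^n w_k · C(n−1, k−1) · φ^{k−1} (1−φ)^{n−k} = ∑_{k=1}^n k · (w_k − w_{k+1}) · ξ_k(φ). -/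
/-- `ξ_k(φ)`: the interim allocation function of the simple contest splitting a
unit budget equally among the top `k` of `n` ranks. -/
noncomputable def xi (n k : ℕ) (φ : ℝ) : ℝ :=
  (1/(k:ℝ)) * ∑ l ∈ Finset.Icc 1 k, (Nat.choose (n-1) (l-1) : ℝ) * φ^(l-1) * (1-φ)^(n-l)

lemma telescope (w : ℕ → ℝ) (l n : ℕ) (h : l ≤ n) :
    ∑ k ∈ Finset.Icc l n, (w k - w (k+1)) = w l - w (n+1) := by
  induction n with
  | zero => interval_cases l; simp
  | succ m ih =>
    rcases Nat.lt_or_ge l (m+1) with hl | hl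
    · rw [Finset.sum_Icc_succ_top (Nat.le_of_lt_succ hl |>.trans (Nat.le_succ m)),
        ih (Nat.le_of_lt_succ hl)]
      ring
    · have : l = m + 1 := le_antisymm h hl
      subst this
      simp

/-- Decomposition of an arbitrary interim allocation function into
simple-contest allocation functions:
`x_w(φ) = ∑_{k=1}^n k (w_k − w_{k+1}) ξ_k(φ)`, with the convention `w_{n+1} = 0`. -/
theorem interimAlloc_eq_sum_simple
    (n : ℕ) (hn : 1 ≤ n) (w : ℕ → ℝ) (hw : w (n+1) = 0)
    (φ : ℝ) (hφ : φ ∈ Set.Icc (0:ℝ) 1) :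
    interimAlloc n w φ
    = ∑ k ∈ Finset.Icc 1 n, (k:ℝ) * (w k - w (k+1)) * xi n k φ := by
  unfold interimAlloc xi
  have step1 : ∀ k ∈ Finset.Icc 1 n,
      (k:ℝ) * (w k - w (k+1)) *
        ((1/(k:ℝ)) * ∑ l ∈ Finset.Icc 1 k, (Nat.choose (n-1) (l-1) : ℝ) * φ^(l-1) * (1-φ)^(n-l))
      = ∑ l ∈ Finset.Icc 1 k,
          (w k - w (k+1)) * ((Nat.choose (n-1) (l-1) : ℝ) * φ^(l-1) * (1-φ)^(n-l)) := by
    intro k hk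
    have hk1 : 1 ≤ k := (Finset.mem_Icc.mp hk).1
    have hk0 : (k:ℝ) ≠ 0 := Nat.cast_ne_zero.mpr (by omega)
    rw [← Finset.mul_sum]
    field_simp
  rw [Finset.sum_congr rfl step1]
  rw [Finset.sum_comm' (t := fun k => Finset.Icc 1 k) (s' := fun l => Finset.Icc l n)
    (t' := Finset.Icc 1 n) (by
      intro k l
      simp only [Finset.mem_Icc]
      omega)]
  apply Finset.sum_congr rfl
  intro l hl
  have hl' := Finset.mem_Icc.mp hl
  rw [← Finset.sum_mul, telescope w l n hl'.2, hw]
  ring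
end

section
/- Let n ≥ 1 be an integer and let α_1 ≥ α_2 ≥ ⋯ ≥ α_n ≥ 0 be reals. Then the function φ ↦ ∑_{k=1}^n α_k · C(n−1, k−1) · φ^{k−1} (1−φ)^{n−k} is nonnegative and nonincreasing on [0,1]. (This is Lemma 5 of the paper: nonincreasing nonnegative rank weights α are weight-monotone, i.e., G(φ; α) = n ∑_{k=1}^n α_k ∫_0^φ C(n−1, k−1) t^{k−1} (1−t)^{n−k} dt is nondecreasing and concave on [0,1].) -/
open Finset

private lemma alpha_chain (n : ℕ) (α : ℕ → ℝ)
    (hmono : ∀ k, 1 ≤ k → k < n → α (k+1) ≤ α k) :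
    ∀ d k, 1 ≤ k → k + d ≤ n → α (k + d) ≤ α k := by
  intro d
  induction d with
  | zero => intro k _ _; simp
  | succ d ih =>
    intro k hk hkd
    have h1 : α (k + d + 1) ≤ α (k + d) :=
      hmono (k + d) (le_trans hk (Nat.le_add_right _ _)) (by omega)
    exact h1.trans (ih k hk (by omega))

/-- Lemma 5 of the paper: if the rank weights `α_1 ≥ ⋯ ≥ α_n ≥ 0` are
nonincreasing and nonnegative, then `φ ↦ ∑_{k=1}^n α_k g_k(φ)` with
`g_k(φ) = C(n−1,k−1) φ^{k−1}(1−φ)^{n−k}` is nonnegative and nonincreasing on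
`[0,1]` (i.e. `α` is weight-monotone). -/
theorem weight_monotone_of_antitone_nonneg
    (n : ℕ) (hn : 1 ≤ n) (α : ℕ → ℝ)
    (hmono : ∀ k, 1 ≤ k → k < n → α (k+1) ≤ α k) (hnn : 0 ≤ α n) :
    (∀ φ ∈ Set.Icc (0:ℝ) 1,
      0 ≤ ∑ k ∈ Finset.Icc 1 n,
            α k * (Nat.choose (n-1) (k-1) : ℝ) * φ^(k-1) * (1-φ)^(n-k)) ∧
    AntitoneOn (fun φ => ∑ k ∈ Finset.Icc 1 n,
            α k * (Nat.choose (n-1) (k-1) : ℝ) * φ^(k-1) * (1-φ)^(n-k))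
      (Set.Icc 0 1) := by
  -- nonnegativity of each weight
  have halpha : ∀ k, 1 ≤ k → k ≤ n → 0 ≤ α k := by
    intro k hk1 hkn
    have h := alpha_chain n α hmono (n - k) k hk1 (by omega)
    rw [show k + (n - k) = n by omega] at h
    linarith
  obtain ⟨m, rfl⟩ : ∃ m, n = m + 1 := ⟨n - 1, by omega⟩
  -- rewrite the sum over `Icc 1 (m+1)` as a sum over `range (m+1)`
  set F : ℝ → ℝ := fun φ => ∑ i ∈ range (m+1),
      α (i+1) * (Nat.choose m i : ℝ) * φ^i * (1-φ)^(m-i) with hF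
  have key : ∀ φ : ℝ, (∑ k ∈ Finset.Icc 1 (m+1),
      α k * (Nat.choose (m+1-1) (k-1) : ℝ) * φ^(k-1) * (1-φ)^(m+1-k)) = F φ := by
    intro φ
    rw [hF, ← Finset.Ico_add_one_right_eq_Icc, Finset.sum_Ico_eq_sum_range]
    apply Finset.sum_congr (by norm_num)
    intro i hi
    rw [show (1:ℕ) + i = i + 1 by omega, show i + 1 - 1 = i by omega,
      show m + 1 - 1 = m by omega, show m + 1 - (i + 1) = m - i by omega]
  -- the derivative
  set D : ℝ → ℝ := fun φ => ∑ i ∈ range m,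
      (α (i+2) - α (i+1)) * (((m-i : ℕ) : ℝ) * (Nat.choose m i : ℝ) * φ^i * (1-φ)^(m-1-i))
    with hD
  have hder : ∀ φ : ℝ, HasDerivAt F (D φ) φ := by
    intro φ
    have hterm : ∀ i ∈ range (m+1),
        HasDerivAt (fun x : ℝ => α (i+1) * (Nat.choose m i : ℝ) * x^i * (1-x)^(m-i))
          ((α (i+1) * (Nat.choose m i : ℝ) * ((i : ℝ) * φ^(i-1))) * (1-φ)^(m-i)
            + (α (i+1) * (Nat.choose m i : ℝ) * φ^i) *
              (((m-i : ℕ) : ℝ) * (1-φ)^(m-i-1) * (-1))) φ := by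
      intro i _
      have hlin : HasDerivAt (fun x : ℝ => 1 - x) (-1) φ := by
        simpa using (hasDerivAt_id φ).const_sub 1
      have hg : HasDerivAt (fun x : ℝ => (1-x)^(m-i))
          (((m-i : ℕ) : ℝ) * (1-φ)^(m-i-1) * (-1)) φ := by
        simpa [Function.comp_def] using (hasDerivAt_pow (m-i) (1-φ)).comp φ hlin
      have hf : HasDerivAt (fun x : ℝ => α (i+1) * (Nat.choose m i : ℝ) * x^i)
          (α (i+1) * (Nat.choose m i : ℝ) * ((i : ℝ) * φ^(i-1))) φ := by
        simpa [mul_assoc] using (hasDerivAt_pow i φ).const_mul (α (i+1) * (Nat.choose m i : ℝ))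
      exact hf.mul hg
    have hsum := HasDerivAt.sum hterm
    have heq : (∑ i ∈ range (m+1),
        ((α (i+1) * (Nat.choose m i : ℝ) * ((i : ℝ) * φ^(i-1))) * (1-φ)^(m-i)
          + (α (i+1) * (Nat.choose m i : ℝ) * φ^i) *
            (((m-i : ℕ) : ℝ) * (1-φ)^(m-i-1) * (-1)))) = D φ := by
      rw [Finset.sum_add_distrib, Finset.sum_range_succ', Finset.sum_range_succ]
      simp only [Nat.cast_zero, zero_mul, mul_zero, add_zero, Nat.sub_self, Nat.cast_zero]
      rw [hD]
      simp only [Nat.cast_zero, zero_mul, mul_zero, add_zero]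
      rw [← Finset.sum_add_distrib]
      apply Finset.sum_congr rfl
      intro i hi
      have hi' : i < m := Finset.mem_range.mp hi
      have hnat : Nat.choose m (i+1) * (i+1) = Nat.choose m i * (m - i) :=
        Nat.choose_succ_right_eq m i
      have hc : ((Nat.choose m (i+1) : ℝ)) * ((i : ℝ) + 1)
          = (Nat.choose m i : ℝ) * ((m - i : ℕ) : ℝ) := by exact_mod_cast hnat
      rw [show m - (i+1) = m - 1 - i by omega, show m - i - 1 = m - 1 - i by omega,
        show i + 1 + 1 = i + 2 by omega]
      push_cast
      linear_combination (α (i+2) * φ^i * (1-φ)^(m-1-i)) * hc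
    rw [← heq]
    have hfeq : (∑ i ∈ range (m+1), fun x : ℝ => α (i+1) * (Nat.choose m i : ℝ) * x^i * (1-x)^(m-i)) = F := by
      ext x
      simp [hF, Finset.sum_apply]
    rw [hfeq] at hsum
    exact hsum
  constructor
  · -- nonnegativity
    intro φ hφ
    apply Finset.sum_nonneg
    intro k hk
    obtain ⟨hk1, hkn⟩ := Finset.mem_Icc.mp hk
    have h0 : 0 ≤ α k := halpha k hk1 hkn
    have h1 : (0:ℝ) ≤ 1 - φ := by linarith [hφ.2]
    have h2 : (0:ℝ) ≤ φ := hφ.1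
    positivity
  · -- antitonicity
    have hfun : (fun φ : ℝ => ∑ k ∈ Finset.Icc 1 (m+1),
        α k * (Nat.choose (m+1-1) (k-1) : ℝ) * φ^(k-1) * (1-φ)^(m+1-k)) = F :=
      funext key
    rw [hfun]
    apply antitoneOn_of_deriv_nonpos (convex_Icc 0 1)
    · exact fun x _ => ((hder x).differentiableAt.continuousAt).continuousWithinAt
    · exact fun x _ => (hder x).differentiableAt.differentiableWithinAt
    · intro x hx
      rw [interior_Icc] at hx
      rw [(hder x).deriv, hD]
      apply Finset.sum_nonpos
      intro i hi
      have hi' : i < m := Finset.mem_range.mp hi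
      have hneg : α (i+2) - α (i+1) ≤ 0 := by
        have := hmono (i+1) (by omega) (by omega)
        rw [show i + 1 + 1 = i + 2 by omega] at this
        linarith
      have hpos : (0:ℝ) ≤ ((m-i : ℕ) : ℝ) * (Nat.choose m i : ℝ) * x^i * (1-x)^(m-1-i) := by
        have h1 : (0:ℝ) ≤ 1 - x := by linarith [hx.2]
        have h2 : (0:ℝ) ≤ x := hx.1.le
        positivity
      exact mul_nonpos_of_nonpos_of_nonneg hneg hpos
end

section
/- Let n ≥ 1 be an integer and T ≥ 0 a real. For every prize structure w of length n with ∑_{k=1}^n w_k ≤ T and every φ ∈ [0,1]: x_w(φ) ≤ T · max_{k∈{1,…,n}} ξ_k(φ). Moreover, for each k ∈ {1,…,n} the simple contest w^{(k,T)} with first k prizes equal to T/k and remaining prizes 0 satisfies x_{w^{(k,T)}}(φ) = T · ξ_k(φ); hence the maximum of x_w(φ) over all prize structures with total at most T equals T · max_{k∈{1,…,n}} ξ_k(φ). -/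
/-- The simple contest `w^{(k,T)}`: the first `k` prizes equal `T/k`, the
remaining prizes are `0`. -/
noncomputable def simpleContest (k : ℕ) (T : ℝ) : ℕ → ℝ :=
  fun l => if 1 ≤ l ∧ l ≤ k then T / k else 0

/-- Telescoping sum over `Ico`. -/
lemma tele_Ico (w : ℕ → ℝ) (l : ℕ) :
    ∀ n, l ≤ n → ∑ k ∈ Finset.Ico l n, (w k - w (k+1)) = w l - w n := by
  intro n
  induction n with
  | zero => intro h; interval_cases l; simp
  | succ m ih =>
    intro h
    rcases Nat.lt_succ_iff_lt_or_eq.mp (Nat.lt_succ_of_le h) with h' | rfl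
    · have hlm : l ≤ m := Nat.lt_succ_iff.mp h'
      rw [Finset.sum_Ico_succ_top hlm, ih hlm]
      ring
    · simp

/-- Telescoping sum over `Icc`. -/
lemma tele_Icc (w : ℕ → ℝ) (l n : ℕ) (h2 : l ≤ n) :
    ∑ k ∈ Finset.Icc l n, (w k - if k < n then w (k+1) else 0) = w l := by
  rw [← Finset.Ico_add_one_right_eq_Icc, Finset.sum_Ico_succ_top (by omega)]
  have hcongr : ∀ k ∈ Finset.Ico l n,
      (w k - if k < n then w (k+1) else 0) = w k - w (k+1) := by
    intro k hk
    rw [Finset.mem_Ico] at hk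
    rw [if_pos hk.2]
  rw [Finset.sum_congr rfl hcongr, tele_Ico w l n h2, if_neg (lt_irrefl n)]
  ring

/-- Abel summation identity. -/
lemma abel_sum (n : ℕ) (w c : ℕ → ℝ) :
    ∑ l ∈ Finset.Icc 1 n, w l * c l
      = ∑ k ∈ Finset.Icc 1 n,
          (w k - if k < n then w (k+1) else 0) * ∑ l ∈ Finset.Icc 1 k, c l := by
  have hcomm : ∀ k l : ℕ,
      k ∈ Finset.Icc 1 n ∧ l ∈ Finset.Icc 1 k ↔ k ∈ Finset.Icc l n ∧ l ∈ Finset.Icc 1 n := by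
    intro k l
    simp only [Finset.mem_Icc]
    omega
  calc ∑ l ∈ Finset.Icc 1 n, w l * c l
      = ∑ l ∈ Finset.Icc 1 n,
          (∑ k ∈ Finset.Icc l n, (w k - if k < n then w (k+1) else 0)) * c l := by
        refine Finset.sum_congr rfl fun l hl => ?_
        rw [Finset.mem_Icc] at hl
        rw [tele_Icc w l n hl.2]
    _ = ∑ l ∈ Finset.Icc 1 n, ∑ k ∈ Finset.Icc l n,
          (w k - if k < n then w (k+1) else 0) * c l := by
        refine Finset.sum_congr rfl fun l _ => ?_
        rw [Finset.sum_mul]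
    _ = ∑ k ∈ Finset.Icc 1 n, ∑ l ∈ Finset.Icc 1 k,
          (w k - if k < n then w (k+1) else 0) * c l := by
        exact (Finset.sum_comm' hcomm).symm
    _ = ∑ k ∈ Finset.Icc 1 n,
          (w k - if k < n then w (k+1) else 0) * ∑ l ∈ Finset.Icc 1 k, c l := by
        refine Finset.sum_congr rfl fun k _ => ?_
        rw [Finset.mul_sum]

/-- Key optimization step in Theorem 7 of the paper: every prize structure with
total at most `T` has interim allocation at most `T · max_k ξ_k(φ)`, each simple
contest `w^{(k,T)}` attains `T · ξ_k(φ)`, and hence the maximum of `x_w(φ)` over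
prize structures with total at most `T` is exactly `T · max_k ξ_k(φ)`. -/
theorem simple_contest_pointwise_optimal
    (n : ℕ) (hn : 1 ≤ n) (T : ℝ) (hT : 0 ≤ T) (φ : ℝ) (hφ : φ ∈ Set.Icc (0:ℝ) 1) :
    (∀ w : ℕ → ℝ, IsPrizeStructure n w → ∑ k ∈ Finset.Icc 1 n, w k ≤ T →
      interimAlloc n w φ
        ≤ T * (Finset.Icc 1 n).sup' (Finset.nonempty_Icc.mpr hn) (fun k => xi n k φ)) ∧
    (∀ k ∈ Finset.Icc 1 n, interimAlloc n (simpleContest k T) φ = T * xi n k φ) ∧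
    IsGreatest
      {y | ∃ w : ℕ → ℝ, IsPrizeStructure n w ∧
            (∑ k ∈ Finset.Icc 1 n, w k) ≤ T ∧ y = interimAlloc n w φ}
      (T * (Finset.Icc 1 n).sup' (Finset.nonempty_Icc.mpr hn) (fun k => xi n k φ)) := by
  obtain ⟨hφ0, hφ1⟩ := hφ
  set c : ℕ → ℝ := fun l => (Nat.choose (n-1) (l-1) : ℝ) * φ^(l-1) * (1-φ)^(n-l) with hc_def
  have hc : ∀ l, 0 ≤ c l := by
    intro l
    have h1 : (0:ℝ) ≤ 1 - φ := by linarith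
    positivity
  set M : ℝ := (Finset.Icc 1 n).sup' (Finset.nonempty_Icc.mpr hn) (fun k => xi n k φ) with hM_def
  -- interimAlloc as a sum of `w l * c l`
  have hIA : ∀ w : ℕ → ℝ, interimAlloc n w φ = ∑ l ∈ Finset.Icc 1 n, w l * c l := by
    intro w
    refine Finset.sum_congr rfl fun l _ => ?_
    simp only [hc_def]
    ring
  -- `k * xi n k φ` equals the partial sum of `c`
  have hS : ∀ k : ℕ, 1 ≤ k → (k : ℝ) * xi n k φ = ∑ l ∈ Finset.Icc 1 k, c l := by
    intro k hk
    have hk0 : (k : ℝ) ≠ 0 := Nat.cast_ne_zero.mpr (by omega)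
    simp only [xi, hc_def]
    field_simp
  have hxi_nonneg : ∀ k, 1 ≤ k → 0 ≤ xi n k φ := by
    intro k hk
    have h1 : (0:ℝ) ≤ 1/(k:ℝ) := by positivity
    have h2 : 0 ≤ ∑ l ∈ Finset.Icc 1 k, c l :=
      Finset.sum_nonneg fun l _ => hc l
    simp only [xi]
    exact mul_nonneg h1 (by simpa [hc_def] using h2)
  have hM0 : 0 ≤ M := by
    have h1 : xi n 1 φ ≤ M :=
      Finset.le_sup' (fun k => xi n k φ) (Finset.mem_Icc.mpr ⟨le_refl 1, hn⟩)
    exact le_trans (hxi_nonneg 1 le_rfl) h1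
  -- Part 1: upper bound
  have part1 : ∀ w : ℕ → ℝ, IsPrizeStructure n w → ∑ k ∈ Finset.Icc 1 n, w k ≤ T →
      interimAlloc n w φ ≤ T * M := by
    intro w hw hsum
    obtain ⟨hmono, hlast⟩ := hw
    -- coefficients in the Abel decomposition are nonnegative
    have hd : ∀ k ∈ Finset.Icc 1 n, 0 ≤ w k - if k < n then w (k+1) else 0 := by
      intro k hk
      rw [Finset.mem_Icc] at hk
      by_cases h : k < n
      · rw [if_pos h]
        have := hmono k hk.1 h
        linarith
      · rw [if_neg h]
        have : k = n := by omega
        simpa [this] using hlast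
    rw [hIA w, abel_sum n w c]
    -- total weight identity (Abel with constant function 1)
    have htot : ∑ k ∈ Finset.Icc 1 n,
        (w k - if k < n then w (k+1) else 0) * (k : ℝ) = ∑ l ∈ Finset.Icc 1 n, w l := by
      have := abel_sum n w (fun _ => 1)
      simp only [mul_one] at this
      rw [this]
      refine Finset.sum_congr rfl fun k _ => ?_
      simp [Nat.card_Icc]
    calc ∑ k ∈ Finset.Icc 1 n,
            (w k - if k < n then w (k+1) else 0) * ∑ l ∈ Finset.Icc 1 k, c l
        ≤ ∑ k ∈ Finset.Icc 1 n,
            (w k - if k < n then w (k+1) else 0) * ((k : ℝ) * M) := by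
          refine Finset.sum_le_sum fun k hk => ?_
          refine mul_le_mul_of_nonneg_left ?_ (hd k hk)
          rw [Finset.mem_Icc] at hk
          rw [← hS k hk.1]
          have hxiM : xi n k φ ≤ M :=
            Finset.le_sup' (fun k => xi n k φ) (Finset.mem_Icc.mpr hk)
          have hk0 : (0:ℝ) ≤ (k:ℝ) := Nat.cast_nonneg k
          exact mul_le_mul_of_nonneg_left hxiM hk0
      _ = (∑ k ∈ Finset.Icc 1 n,
            (w k - if k < n then w (k+1) else 0) * (k : ℝ)) * M := by
          rw [Finset.sum_mul]
          refine Finset.sum_congr rfl fun k _ => ?_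
          ring
      _ = (∑ l ∈ Finset.Icc 1 n, w l) * M := by rw [htot]
      _ ≤ T * M := mul_le_mul_of_nonneg_right hsum hM0
  -- Part 2: simple contests attain `T * xi`
  have part2 : ∀ k ∈ Finset.Icc 1 n, interimAlloc n (simpleContest k T) φ = T * xi n k φ := by
    intro k hk
    rw [Finset.mem_Icc] at hk
    have hk0 : (k : ℝ) ≠ 0 := Nat.cast_ne_zero.mpr (by omega)
    rw [hIA]
    have hsub : Finset.Icc 1 k ⊆ Finset.Icc 1 n := Finset.Icc_subset_Icc_right hk.2
    have hzero : ∀ l ∈ Finset.Icc 1 n, l ∉ Finset.Icc 1 k → simpleContest k T l * c l = 0 := by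
      intro l hl hnl
      rw [Finset.mem_Icc] at hl
      rw [Finset.mem_Icc] at hnl
      have : ¬ (1 ≤ l ∧ l ≤ k) := by omega
      simp [simpleContest, this]
    rw [← Finset.sum_subset hsub hzero]
    have heq : ∀ l ∈ Finset.Icc 1 k, simpleContest k T l * c l = (T / k) * c l := by
      intro l hl
      rw [Finset.mem_Icc] at hl
      simp [simpleContest, hl.1, hl.2]
    rw [Finset.sum_congr rfl heq, ← Finset.mul_sum, ← hS k hk.1]
    field_simp
  refine ⟨part1, part2, ?_, ?_⟩
  · -- membership: a maximizing simple contest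
    obtain ⟨k0, hk0mem, hk0eq⟩ :=
      Finset.exists_mem_eq_sup' (Finset.nonempty_Icc.mpr hn) (fun k => xi n k φ)
    have hk0 := Finset.mem_Icc.mp hk0mem
    have hk0ne : (k0 : ℝ) ≠ 0 := Nat.cast_ne_zero.mpr (by omega)
    have hdiv : 0 ≤ T / (k0 : ℝ) := div_nonneg hT (Nat.cast_nonneg k0)
    refine ⟨simpleContest k0 T, ⟨?_, ?_⟩, ?_, ?_⟩
    · intro l hl hln
      simp only [simpleContest]
      split_ifs with h1 h2 <;> first | exact le_rfl | exact hdiv | omega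
    · simp only [simpleContest]
      split_ifs <;> [exact hdiv; exact le_rfl]
    · -- total equals T
      have hsub : Finset.Icc 1 k0 ⊆ Finset.Icc 1 n := Finset.Icc_subset_Icc_right hk0.2
      have hzero : ∀ l ∈ Finset.Icc 1 n, l ∉ Finset.Icc 1 k0 → simpleContest k0 T l = 0 := by
        intro l hl hnl
        rw [Finset.mem_Icc] at hl hnl
        have : ¬ (1 ≤ l ∧ l ≤ k0) := by omega
        simp [simpleContest, this]
      rw [← Finset.sum_subset hsub hzero]
      have heq : ∀ l ∈ Finset.Icc 1 k0, simpleContest k0 T l = T / k0 := by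
        intro l hl
        rw [Finset.mem_Icc] at hl
        simp [simpleContest, hl.1, hl.2]
      rw [Finset.sum_congr rfl heq, Finset.sum_const, Nat.card_Icc]
      simp only [Nat.add_sub_cancel, nsmul_eq_mul]
      have hcancel : (k0:ℝ) * (T / k0) = T := by field_simp
      rw [hcancel]
    · rw [part2 k0 hk0mem, ← hk0eq]
  · -- upper bound
    rintro y ⟨w, hw, hsum, rfl⟩
    exact part1 w hw hsum
end

section
/- Let n ≥ 1 be an integer, T > 0 a real, and w' a prize structure of length n with ∑_{k=1}^n w'_k ≤ T. Then the winner-take-all interim allocation x_{w*}(φ) = T(1−φ)^{n−1} is single-crossing with respect to x_{w'}: there exists φ_0 ∈ [0,1] such that T(1−φ)^{n−1} ≥ x_{w'}(φ) for all φ ∈ [0, φ_0) and T(1−φ)^{n−1} ≤ x_{w'}(φ) for all φ ∈ (φ_0, 1]. -/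
/-- `f` is single-crossing with respect to `g` on `[0,1]`: there is `φ₀ ∈ [0,1]`
with `f ≥ g` on `[0,φ₀)` and `f ≤ g` on `(φ₀,1]`. -/
def SingleCrossing (f g : ℝ → ℝ) : Prop :=
  ∃ φ₀ ∈ Set.Icc (0:ℝ) 1,
    (∀ φ ∈ Set.Ico (0:ℝ) φ₀, g φ ≤ f φ) ∧ (∀ φ ∈ Set.Ioc φ₀ 1, f φ ≤ g φ)

/-- The winner-take-all interim allocation `T(1−φ)^{n−1}` is single-crossing
with respect to the interim allocation of any prize structure `w'` with total
prize at most `T`. -/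
theorem winner_take_all_single_crossing
    (n : ℕ) (hn : 1 ≤ n) (T : ℝ) (hT : 0 < T) (w' : ℕ → ℝ)
    (hw' : IsPrizeStructure n w') (hsum : ∑ k ∈ Finset.Icc 1 n, w' k ≤ T) :
    SingleCrossing (fun φ => T * (1-φ)^(n-1)) (interimAlloc n w') := by
  obtain ⟨hmonostep, hwn⟩ := hw'
  -- monotonicity of w'
  have hwmono : ∀ j k, 1 ≤ j → j ≤ k → k ≤ n → w' k ≤ w' j := by
    intro j k hj hjk hkn
    induction k with
    | zero => omega
    | succ m ih =>
      rcases Nat.eq_or_lt_of_le hjk with h | h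
      · rw [h]
      · have hm : j ≤ m := by omega
        have h1 : 1 ≤ m := by omega
        exact le_trans (hmonostep m h1 (by omega)) (ih hm (by omega))
  have hwnn : ∀ k, 1 ≤ k → k ≤ n → 0 ≤ w' k := fun k hk hkn =>
    le_trans hwn (hwmono k n hk hkn le_rfl)
  -- the reduced function
  set g : ℝ → ℝ := fun φ =>
    ∑ k ∈ Finset.Icc 1 n, w' k * (Nat.choose (n-1) (k-1) : ℝ) * (φ/(1-φ))^(k-1) with hg
  have hgmono : ∀ a b, 0 ≤ a → a ≤ b → b < 1 → g a ≤ g b := by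
    intro a b ha hab hb1
    apply Finset.sum_le_sum
    intro k hk
    simp only [Finset.mem_Icc] at hk
    have hcoef : 0 ≤ w' k * (Nat.choose (n-1) (k-1) : ℝ) :=
      mul_nonneg (hwnn k hk.1 hk.2) (Nat.cast_nonneg _)
    apply mul_le_mul_of_nonneg_left _ hcoef
    apply pow_le_pow_left₀ (div_nonneg ha (by linarith))
    exact div_le_div₀ (by linarith) hab (by linarith) (by linarith)
  -- relation to interimAlloc on [0,1)
  have hrel : ∀ φ : ℝ, 0 ≤ φ → φ < 1 →
      interimAlloc n w' φ = g φ * (1-φ)^(n-1) := by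
    intro φ hφ0 hφ1
    rw [hg]
    simp only
    rw [Finset.sum_mul]
    apply Finset.sum_congr rfl
    intro k hk
    simp only [Finset.mem_Icc] at hk
    have hne : (1-φ) ≠ 0 := by linarith
    have hsplit : (1-φ)^(n-1) = (1-φ)^(k-1) * (1-φ)^(n-k) := by
      rw [← pow_add]; congr 1; omega
    rw [hsplit, div_pow]
    field_simp
  -- equivalence of the crossing condition
  have hiff : ∀ φ : ℝ, 0 ≤ φ → φ < 1 →
      (interimAlloc n w' φ ≤ T * (1-φ)^(n-1) ↔ g φ ≤ T) := by
    intro φ hφ0 hφ1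
    rw [hrel φ hφ0 hφ1]
    exact mul_le_mul_iff_of_pos_right (pow_pos (by linarith) _)
  -- the set
  set S : Set ℝ := {φ | φ ∈ Set.Ico (0:ℝ) 1 ∧ g φ ≤ T} with hS
  have hg0 : g 0 ≤ T := by
    have : g 0 = w' 1 := by
      rw [hg]
      simp only
      rw [Finset.sum_eq_single 1]
      · simp
      · intro k hk hk1
        simp only [Finset.mem_Icc] at hk
        have : k - 1 ≠ 0 := by omega
        simp [zero_div, zero_pow this]
      · intro h; simp [Finset.mem_Icc] at h; omega
    rw [this]
    calc w' 1 ≤ ∑ k ∈ Finset.Icc 1 n, w' k := by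
          apply Finset.single_le_sum (fun k hk => ?_) (by simp [Finset.mem_Icc]; omega)
          simp only [Finset.mem_Icc] at hk
          exact hwnn k hk.1 hk.2
      _ ≤ T := hsum
  have h0S : (0:ℝ) ∈ S := ⟨⟨le_rfl, by norm_num⟩, hg0⟩
  have hSne : S.Nonempty := ⟨0, h0S⟩
  have hSbdd : BddAbove S := ⟨1, fun x hx => le_of_lt hx.1.2⟩
  set φ₀ := sSup S with hφ₀
  have hφ₀0 : 0 ≤ φ₀ := le_csSup hSbdd h0S
  have hφ₀1 : φ₀ ≤ 1 := csSup_le hSne (fun x hx => le_of_lt hx.1.2)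
  refine ⟨φ₀, ⟨hφ₀0, hφ₀1⟩, ?_, ?_⟩
  · intro φ hφ
    obtain ⟨hφ0, hφlt⟩ := hφ
    obtain ⟨ψ, hψS, hφψ⟩ := exists_lt_of_lt_csSup hSne hφlt
    have hψ1 : ψ < 1 := hψS.1.2
    have hφ1 : φ < 1 := lt_trans hφψ hψ1
    rw [hiff φ hφ0 hφ1]
    exact le_trans (hgmono φ ψ hφ0 (le_of_lt hφψ) hψ1) hψS.2
  · intro φ hφ
    obtain ⟨hφgt, hφ1⟩ := hφ
    have hφ0 : 0 ≤ φ := le_trans hφ₀0 (le_of_lt hφgt)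
    rcases lt_or_eq_of_le hφ1 with hlt | heq
    · have hnotS : φ ∉ S := fun hmem => absurd (le_csSup hSbdd hmem) (not_le.mpr hφgt)
      have : ¬ (g φ ≤ T) := fun h => hnotS ⟨⟨hφ0, hlt⟩, h⟩
      have := (hiff φ hφ0 hlt).not.mpr this
      exact le_of_lt (not_le.mp this)
    · -- φ = 1
      subst heq
      -- φ₀ < 1, so there is ψ ∈ (φ₀,1) not in S, forcing n ≥ 2
      have hn2 : 2 ≤ n := by
        by_contra h
        have hn1 : n = 1 := by omega
        have : ∀ ψ : ℝ, 0 ≤ ψ → ψ < 1 → ψ ∈ S := by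
          intro ψ hψ0 hψ1
          refine ⟨⟨hψ0, hψ1⟩, ?_⟩
          rw [hg]; simp only
          subst hn1
          simpa using hsum
        have hmid : (φ₀+1)/2 ∈ S := this _ (by linarith) (by linarith)
        have := le_csSup hSbdd hmid
        linarith
      have h1 : (1:ℝ) - 1 = 0 := by ring
      simp only [h1]
      rw [zero_pow (by omega : n - 1 ≠ 0), mul_zero]
      apply Finset.sum_nonneg
      intro k hk
      simp only [Finset.mem_Icc] at hk
      have := hwnn k hk.1 hk.2
      positivity
end

section
/- Let n ≥ 2 be an integer, T > 0 a real, and w' a prize structure of length n with ∑_{k=1}^n w'_k ≤ T. Then the negated derivative of the winner-take-all interim allocation, −x_{w*}'(φ) = T(n−1)(1−φ)^{n−2}, is single-crossing with respect to −x_{w'}'(φ) = (n−1) ∑_{k=1}^{n−1} (w'_k − w'_{k+1}) C(n−2, k−1) φ^{k−1}(1−φ)^{n−1−k}: there exists φ_0 ∈ [0,1] such that −x_{w*}'(φ) ≥ −x_{w'}'(φ) for all φ ∈ [0, φ_0) and −x_{w*}'(φ) ≤ −x_{w'}'(φ) for all φ ∈ (φ_0, 1]. -/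
/-- The negated derivative of the winner-take-all interim allocation,
`−x_{w*}'(φ) = T(n−1)(1−φ)^{n−2}`, is single-crossing with respect to
`−x_{w'}'(φ) = (n−1) ∑_{k=1}^{n−1} (w'_k − w'_{k+1}) C(n−2,k−1) φ^{k−1}(1−φ)^{n−1−k}`
for any prize structure `w'` with total prize at most `T`. -/
theorem winner_take_all_neg_deriv_single_crossing
    (n : ℕ) (hn : 2 ≤ n) (T : ℝ) (hT : 0 < T) (w' : ℕ → ℝ)
    (hw' : IsPrizeStructure n w') (hsum : ∑ k ∈ Finset.Icc 1 n, w' k ≤ T) :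
    SingleCrossing
      (fun φ => T * ((n:ℝ) - 1) * (1-φ)^(n-2))
      (fun φ => ((n:ℝ) - 1) * ∑ k ∈ Finset.Icc 1 (n-1),
        (w' k - w' (k+1)) * (Nat.choose (n-2) (k-1) : ℝ) * φ^(k-1) * (1-φ)^(n-1-k)) := by
  set Q : ℝ → ℝ := fun φ => ∑ k ∈ Finset.Icc 1 (n-1),
        (w' k - w' (k+1)) * (Nat.choose (n-2) (k-1) : ℝ) * φ^(k-1) * (1-φ)^(n-1-k) with hQ
  have hn1 : (0:ℝ) < (n:ℝ) - 1 := by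
    have : (2:ℝ) ≤ (n:ℝ) := by exact_mod_cast hn
    linarith
  have hc : ∀ k ∈ Finset.Icc 1 (n-1), 0 ≤ (w' k - w' (k+1)) * (Nat.choose (n-2) (k-1) : ℝ) := by
    intro k hk
    rw [Finset.mem_Icc] at hk
    have := hw'.1 k hk.1 (by omega)
    exact mul_nonneg (by linarith) (Nat.cast_nonneg _)
  -- cross-multiplication monotonicity
  have hcross : ∀ a b : ℝ, 0 ≤ a → a ≤ b → b ≤ 1 →
      Q a * (1-b)^(n-2) ≤ Q b * (1-a)^(n-2) := by
    intro a b ha hab hb1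
    rw [hQ]
    simp only [Finset.sum_mul]
    apply Finset.sum_le_sum
    intro k hk
    have hck := hc k hk
    rw [Finset.mem_Icc] at hk
    have hkn : (k - 1) + (n - 1 - k) = n - 2 := by omega
    have h1a : (0:ℝ) ≤ 1 - a := by linarith
    have h1b : (0:ℝ) ≤ 1 - b := by linarith
    have hb0 : (0:ℝ) ≤ b := le_trans ha hab
    have key : (a*(1-b))^(k-1) ≤ (b*(1-a))^(k-1) := by
      apply pow_le_pow_left₀ (by positivity)
      nlinarith
    calc (w' k - w' (k+1)) * (Nat.choose (n-2) (k-1) : ℝ) * a^(k-1) * (1-a)^(n-1-k) * (1-b)^(n-2)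
        = ((w' k - w' (k+1)) * (Nat.choose (n-2) (k-1) : ℝ) * (a*(1-b))^(k-1))
            * ((1-a)*(1-b))^(n-1-k) := by
          rw [← hkn, pow_add, mul_pow, mul_pow]; ring
      _ ≤ ((w' k - w' (k+1)) * (Nat.choose (n-2) (k-1) : ℝ) * (b*(1-a))^(k-1))
            * ((1-a)*(1-b))^(n-1-k) := by
          apply mul_le_mul_of_nonneg_right (mul_le_mul_of_nonneg_left key hck)
          positivity
      _ = (w' k - w' (k+1)) * (Nat.choose (n-2) (k-1) : ℝ) * b^(k-1) * (1-b)^(n-1-k) * (1-a)^(n-2) := by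
          rw [← hkn, pow_add, mul_pow, mul_pow]; ring
  -- transfer lemmas
  have htrans : ∀ a b : ℝ, 0 ≤ a → a < 1 → a ≤ b → b ≤ 1 →
      T * (1-a)^(n-2) < Q a → T * (1-b)^(n-2) ≤ Q b := by
    intro a b ha ha1 hab hb1 h
    have hpos : (0:ℝ) < (1-a)^(n-2) := pow_pos (by linarith) _
    have h1b : (0:ℝ) ≤ (1-b)^(n-2) := pow_nonneg (by linarith) _
    have h1 : T * (1-a)^(n-2) * (1-b)^(n-2) ≤ Q a * (1-b)^(n-2) :=
      mul_le_mul_of_nonneg_right h.le h1b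
    have h2 := hcross a b ha hab hb1
    have h3 : T * (1-b)^(n-2) * (1-a)^(n-2) ≤ Q b * (1-a)^(n-2) := by nlinarith
    exact le_of_mul_le_mul_right h3 hpos
  have htransS : ∀ a b : ℝ, 0 ≤ a → a < 1 → a ≤ b → b < 1 →
      T * (1-a)^(n-2) < Q a → T * (1-b)^(n-2) < Q b := by
    intro a b ha ha1 hab hb1 h
    have hpos : (0:ℝ) < (1-a)^(n-2) := pow_pos (by linarith) _
    have h1b : (0:ℝ) < (1-b)^(n-2) := pow_pos (by linarith) _
    have h1 : T * (1-a)^(n-2) * (1-b)^(n-2) < Q a * (1-b)^(n-2) :=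
      mul_lt_mul_of_pos_right h h1b
    have h2 := hcross a b ha hab hb1.le
    have h3 : T * (1-b)^(n-2) * (1-a)^(n-2) < Q b * (1-a)^(n-2) := by nlinarith
    exact lt_of_mul_lt_mul_right h3 hpos.le
  -- the crossing point
  set A : Set ℝ := insert 0 {φ : ℝ | 0 ≤ φ ∧ φ < 1 ∧ Q φ ≤ T * (1-φ)^(n-2)} with hA
  have hA0 : (0:ℝ) ∈ A := Set.mem_insert _ _
  have hAne : A.Nonempty := ⟨0, hA0⟩
  have hAbdd : ∀ x ∈ A, x ≤ 1 := by
    intro x hx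
    rcases hx with rfl | hx
    · norm_num
    · exact hx.2.1.le
  have hbdd : BddAbove A := ⟨1, hAbdd⟩
  refine ⟨sSup A, ⟨le_csSup hbdd hA0, csSup_le hAne hAbdd⟩, ?_, ?_⟩
  · -- left part: g ≤ f on [0, sSup A)
    rintro φ ⟨hφ0, hφs⟩
    obtain ⟨ψ, hψA, hφψ⟩ := exists_lt_of_lt_csSup hAne hφs
    have hψ : 0 ≤ ψ ∧ ψ < 1 ∧ Q ψ ≤ T * (1-ψ)^(n-2) := by
      rcases hψA with rfl | h
      · linarith
      · exact h
    have hφ1 : φ < 1 := lt_trans hφψ hψ.2.1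
    have hfg : Q φ ≤ T * (1-φ)^(n-2) := by
      by_contra hcon
      push_neg at hcon
      exact absurd (htransS φ ψ hφ0 hφ1 hφψ.le hψ.2.1 hcon) (not_lt.mpr hψ.2.2)
    simp only
    nlinarith
  · -- right part: f ≤ g on (sSup A, 1]
    have hstrict : ∀ φ : ℝ, sSup A < φ → φ < 1 → T * (1-φ)^(n-2) < Q φ := by
      intro φ hφ hφ1
      have hφ0 : 0 ≤ φ := le_trans (le_csSup hbdd hA0) hφ.le
      by_contra hcon
      push_neg at hcon
      have : φ ∈ A := Set.mem_insert_of_mem _ ⟨hφ0, hφ1, hcon⟩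
      exact absurd (le_csSup hbdd this) (not_le.mpr hφ)
    rintro φ ⟨hφs, hφ1⟩
    rcases lt_or_eq_of_le hφ1 with hφ1 | rfl
    · have := hstrict φ hφs hφ1
      simp only
      nlinarith
    · -- φ = 1
      have hs1 : sSup A < 1 := hφs
      set ψ := (sSup A + 1) / 2 with hψ
      have hψ0 : 0 ≤ ψ := by
        have := le_csSup hbdd hA0
        rw [hψ]; linarith
      have hψlt : sSup A < ψ := by rw [hψ]; linarith
      have hψ1 : ψ < 1 := by rw [hψ]; linarith
      have h := htrans ψ 1 hψ0 hψ1 hψ1.le le_rfl (hstrict ψ hψlt hψ1)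
      simp only
      nlinarith
end

section
/- Let n ≥ 2 be an integer, T > 0 a real, and w' a prize structure of length n with ∑_{k=1}^n w'_k ≤ T. Let w* = (T, 0, …, 0) be the winner-take-all prize structure. Then x_{w*} single-crossing-dominates x_{w'}, i.e.: (i) ∫_0^1 x_{w*}(φ) dφ ≥ ∫_0^1 x_{w'}(φ) dφ; (ii) x_{w*} is single-crossing with respect to x_{w'}; and (iii) −x_{w*}' is single-crossing with respect to −x_{w'}'. (This is the crux of Theorem 6 of the paper.) -/
/-- `f` single-crossing-dominates `g`:
(i) `∫_0^1 f ≥ ∫_0^1 g`, (ii) `f` is single-crossing w.r.t. `g`, and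
(iii) `−f'` is single-crossing w.r.t. `−g'`. -/
def SingleCrossDominates (f g : ℝ → ℝ) : Prop :=
  (∫ φ in (0:ℝ)..1, g φ) ≤ (∫ φ in (0:ℝ)..1, f φ) ∧
  SingleCrossing f g ∧
  SingleCrossing (fun φ => -(deriv f φ)) (fun φ => -(deriv g φ))

/-- The winner-take-all prize structure with budget `T`: `w* = (T, 0, …, 0)`. -/
noncomputable def winnerTakeAll (T : ℝ) : ℕ → ℝ := fun k => if k = 1 then T else 0

noncomputable def bern (N : ℕ) (c : ℕ → ℝ) (φ : ℝ) : ℝ :=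
  ∑ i ∈ Finset.range (N+1), c i * (Nat.choose N i : ℝ) * φ^i * (1-φ)^(N-i)

lemma beta_nat (j : ℕ) : ∀ i : ℕ, ∫ x in (0:ℝ)..1, x^i * (1-x)^j
    = (Nat.factorial i * Nat.factorial j : ℝ) / Nat.factorial (i+j+1) := by
  induction j with
  | zero =>
    intro i
    have h : (∫ x in (0:ℝ)..1, x^i * (1-x)^0) = ∫ x in (0:ℝ)..1, x^i := by
      apply intervalIntegral.integral_congr; intro x _; simp
    rw [h, integral_pow]
    simp only [Nat.add_zero, Nat.factorial_succ, Nat.factorial_zero, one_pow,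
      zero_pow (Nat.succ_ne_zero i), Nat.cast_mul, Nat.cast_one, mul_one]
    rw [div_eq_div_iff (by positivity) (by positivity)]
    push_cast
    ring
  | succ j ih =>
    intro i
    have hu : ∀ x ∈ Set.uIcc (0:ℝ) 1, HasDerivAt (fun x : ℝ => (1-x)^(j+1))
        (-(((j:ℝ)+1) * (1-x)^j)) x := by
      intro x _
      have h := (hasDerivAt_pow (j+1) (1-x)).comp x
        (((hasDerivAt_const x (1:ℝ)).sub (hasDerivAt_id x)))
      simpa [Function.comp_def] using h
    have hv : ∀ x ∈ Set.uIcc (0:ℝ) 1, HasDerivAt (fun x : ℝ => x^(i+1)/((i:ℝ)+1))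
        (x^i) x := by
      intro x _
      have h := (hasDerivAt_pow (i+1) x).div_const ((i:ℝ)+1)
      refine h.congr_deriv ?_
      field_simp
      simp
    have hIBP := intervalIntegral.integral_mul_deriv_eq_deriv_mul hu hv
      (((continuous_const.mul ((continuous_const.sub continuous_id).pow j)).neg).intervalIntegrable 0 1)
      ((continuous_pow i).intervalIntegrable 0 1)
    have h1 : (∫ x in (0:ℝ)..1, x^i * (1-x)^(j+1)) = ∫ x in (0:ℝ)..1, (1-x)^(j+1) * x^i := by
      apply intervalIntegral.integral_congr; intro x _; ring
    rw [h1, hIBP]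
    have h2 : (∫ x in (0:ℝ)..1, -(((j:ℝ)+1) * (1-x)^j) * (x^(i+1)/((i:ℝ)+1)))
        = (-(((j:ℝ)+1)/((i:ℝ)+1))) * ∫ x in (0:ℝ)..1, x^(i+1) * (1-x)^j := by
      rw [← intervalIntegral.integral_const_mul]
      apply intervalIntegral.integral_congr; intro x _; field_simp
    rw [h2, ih (i+1)]
    have e1 : (1:ℝ) - 1 = 0 := by ring
    simp only [e1, zero_pow (Nat.succ_ne_zero j), one_pow, zero_mul, mul_zero, sub_zero]
    have : (i+1)+j+1 = i+(j+1)+1 := by omega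
    rw [this]
    have hne : (Nat.factorial (i+(j+1)+1) : ℝ) ≠ 0 := by positivity
    field_simp [Nat.factorial_succ]
    rw [Nat.factorial_succ i, Nat.factorial_succ j, zero_pow (Nat.succ_ne_zero i)]; push_cast; ring

lemma bern_integral (N : ℕ) (c : ℕ → ℝ) :
    (∫ φ in (0:ℝ)..1, bern N c φ) = (∑ i ∈ Finset.range (N+1), c i) / (N+1) := by
  unfold bern
  rw [intervalIntegral.integral_finset_sum]
  · rw [Finset.sum_div]
    apply Finset.sum_congr rfl
    intro i hi
    have hiN : i ≤ N := by simpa [Nat.lt_succ_iff] using hi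
    have h1 : (∫ φ in (0:ℝ)..1, c i * (Nat.choose N i : ℝ) * φ^i * (1-φ)^(N-i))
        = (c i * (Nat.choose N i : ℝ)) * ∫ φ in (0:ℝ)..1, φ^i * (1-φ)^(N-i) := by
      rw [← intervalIntegral.integral_const_mul]
      apply intervalIntegral.integral_congr; intro x _; ring
    rw [h1, beta_nat (N-i) i]
    have h2 : i + (N-i) + 1 = N + 1 := by omega
    rw [h2]
    have h3 : (Nat.choose N i : ℝ) * (Nat.factorial i * Nat.factorial (N-i))
        = Nat.factorial N := by
      rw [← Nat.cast_mul, ← Nat.cast_mul, ← mul_assoc,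
        Nat.choose_mul_factorial_mul_factorial hiN]
    have h4 : (Nat.choose N i : ℝ) * ((Nat.factorial i * Nat.factorial (N-i) : ℝ)
        / ((Nat.factorial (N+1) : ℕ) : ℝ)) = 1/((N:ℝ)+1) := by
      rw [mul_div_assoc', div_eq_div_iff (by positivity) (by positivity), h3,
        Nat.factorial_succ]
      push_cast
      ring
    rw [mul_assoc, h4]
    ring
  · intro i _
    exact (((continuous_const.mul (continuous_pow i)).mul
      ((continuous_const.sub continuous_id).pow (N-i))).intervalIntegrable 0 1)

lemma bern_hasDerivAt (N : ℕ) (c : ℕ → ℝ) (φ : ℝ) :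
    HasDerivAt (bern (N+1) c) (((N:ℝ)+1) * bern N (fun i => c (i+1) - c i) φ) φ := by
  have key : ∀ i ∈ Finset.range (N+2), HasDerivAt
      (fun x : ℝ => c i * (Nat.choose (N+1) i : ℝ) * x^i * (1-x)^(N+1-i))
      (c i * (Nat.choose (N+1) i : ℝ) * ((i:ℝ) * φ^(i-1) * (1-φ)^(N+1-i)
        - ((N+1-i : ℕ):ℝ) * φ^i * (1-φ)^(N-i))) φ := by
    intro i _
    have h1 : HasDerivAt (fun x : ℝ => x^i) ((i:ℝ) * φ^(i-1)) φ := hasDerivAt_pow i φ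
    have h2 : HasDerivAt (fun x : ℝ => (1-x)^(N+1-i))
        (-(((N+1-i : ℕ):ℝ) * (1-φ)^(N+1-i-1))) φ := by
      have h := (hasDerivAt_pow (N+1-i) (1-φ)).comp φ
        ((hasDerivAt_const φ (1:ℝ)).sub (hasDerivAt_id φ))
      simpa [Function.comp_def] using h
    have h3 := ((h1.const_mul (c i * (Nat.choose (N+1) i : ℝ))).mul h2)
    refine h3.congr_deriv ?_
    have : N+1-i-1 = N-i := by omega
    rw [this]
    ring
  have hsum := HasDerivAt.fun_sum key
  have heq : (∑ i ∈ Finset.range (N+2),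
      c i * (Nat.choose (N+1) i : ℝ) * ((i:ℝ) * φ^(i-1) * (1-φ)^(N+1-i)
        - ((N+1-i : ℕ):ℝ) * φ^i * (1-φ)^(N-i)))
      = ((N:ℝ)+1) * bern N (fun i => c (i+1) - c i) φ := by
    have hsplit : ∀ i ∈ Finset.range (N+2),
        c i * (Nat.choose (N+1) i : ℝ) * ((i:ℝ) * φ^(i-1) * (1-φ)^(N+1-i)
          - ((N+1-i : ℕ):ℝ) * φ^i * (1-φ)^(N-i))
        = c i * (Nat.choose (N+1) i : ℝ) * (i:ℝ) * φ^(i-1) * (1-φ)^(N+1-i)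
          - c i * (Nat.choose (N+1) i : ℝ) * ((N+1-i : ℕ):ℝ) * φ^i * (1-φ)^(N-i) := by
      intro i _; ring
    rw [Finset.sum_congr rfl hsplit, Finset.sum_sub_distrib]
    -- A-part : shift index
    rw [Finset.sum_range_succ' (fun i => c i * (Nat.choose (N+1) i : ℝ) * (i:ℝ)
        * φ^(i-1) * (1-φ)^(N+1-i)) (N+1)]
    -- B-part : drop last term
    rw [Finset.sum_range_succ (fun i => c i * (Nat.choose (N+1) i : ℝ) * ((N+1-i:ℕ):ℝ)
        * φ^i * (1-φ)^(N-i)) (N+1)]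
    simp only [Nat.cast_zero, mul_zero, zero_mul, add_zero, Nat.sub_self, Nat.cast_zero,
      mul_zero, zero_mul, sub_zero]
    rw [bern, Finset.mul_sum, ← Finset.sum_sub_distrib]
    apply Finset.sum_congr rfl
    intro i hi
    have hiN : i ≤ N := by simpa [Nat.lt_succ_iff] using hi
    have e1 : (i+1) - 1 = i := by omega
    have e2 : N+1-(i+1) = N-i := by omega
    have c1 : ((Nat.choose (N+1) (i+1) : ℕ):ℝ) * ((i:ℝ)+1) = ((N:ℝ)+1) * (Nat.choose N i : ℝ) := by
      have h0 := Nat.add_one_mul_choose_eq N i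
      have : (N+1) * Nat.choose N i = Nat.choose (N+1) (i+1) * (i+1) := by
        simpa [Nat.succ_eq_add_one] using h0
      have h := congrArg (fun t : ℕ => (t : ℝ)) this
      push_cast at h
      linarith
    have c2 : ((Nat.choose (N+1) i : ℕ):ℝ) * ((N+1-i : ℕ):ℝ) = ((N:ℝ)+1) * (Nat.choose N i : ℝ) := by
      have h := Nat.choose_succ_right_eq (N+1) i
      -- choose (N+1) (i+1) * (i+1) = choose (N+1) i * (N+1-i)
      have h2 : Nat.choose (N+1) i * (N+1-i) = (N+1) * Nat.choose N i := by
        rw [← h]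
        have h0 := Nat.add_one_mul_choose_eq N i
        simpa [Nat.succ_eq_add_one, mul_comm] using h0.symm
      have h3 := congrArg (fun t : ℕ => (t : ℝ)) h2
      push_cast at h3
      push_cast
      linarith
    rw [e1, e2]
    push_cast
    linear_combination (c (i+1) * φ^i * (1-φ)^(N-i)) * c1 - (c i * φ^i * (1-φ)^(N-i)) * c2
  rw [← heq]
  exact hsum

lemma bern_step (N : ℕ) (e : ℕ → ℝ) (he : ∀ i, 1 ≤ i → i ≤ N → e i ≤ 0)
    {a b : ℝ} (ha : 0 ≤ a) (hab : a ≤ b) (hb : b < 1) :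
    bern N e b * (1-a)^N ≤ bern N e a * (1-b)^N := by
  unfold bern
  rw [Finset.sum_mul, Finset.sum_mul]
  apply Finset.sum_le_sum
  intro i hi
  have hiN : i ≤ N := by simpa [Nat.lt_succ_iff] using hi
  rcases Nat.eq_zero_or_pos i with h0 | h1
  · subst h0
    simp only [pow_zero, Nat.sub_zero]
    ring_nf
    rfl
  · have hei : e i ≤ 0 := he i h1 hiN
    have key : a^i * (1-a)^(N-i) * (1-b)^N ≤ b^i * (1-b)^(N-i) * (1-a)^N := by
      obtain ⟨m, rfl⟩ : ∃ m, N = m + i := ⟨N - i, by omega⟩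
      have h1b : (0:ℝ) ≤ 1 - b := by linarith
      have h1a : (0:ℝ) ≤ 1 - a := by linarith
      rw [Nat.add_sub_cancel]
      calc a^i * (1-a)^m * (1-b)^(m+i)
          = (a*(1-b))^i * ((1-a)^m * (1-b)^m) := by
            rw [pow_add, mul_pow]; ring
        _ ≤ (b*(1-a))^i * ((1-a)^m * (1-b)^m) := by
            apply mul_le_mul_of_nonneg_right _ (by positivity)
            apply pow_le_pow_left₀ (by positivity)
            nlinarith
        _ = b^i * (1-b)^m * (1-a)^(m+i) := by
            rw [pow_add, mul_pow]; ring
    calc e i * (Nat.choose N i : ℝ) * b^i * (1-b)^(N-i) * (1-a)^N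
        = (e i * (Nat.choose N i : ℝ)) * (b^i * (1-b)^(N-i) * (1-a)^N) := by ring
      _ ≤ (e i * (Nat.choose N i : ℝ)) * (a^i * (1-a)^(N-i) * (1-b)^N) := by
          apply mul_le_mul_of_nonpos_left key
          exact mul_nonpos_of_nonpos_of_nonneg hei (Nat.cast_nonneg _)
      _ = e i * (Nat.choose N i : ℝ) * a^i * (1-a)^(N-i) * (1-b)^N := by ring

lemma bern_one (N : ℕ) (c : ℕ → ℝ) : bern N c 1 = c N := by
  unfold bern
  rw [Finset.sum_eq_single_of_mem N (Finset.self_mem_range_succ N)]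
  · simp
  · intro i hi hne
    have : 1 ≤ N - i := by
      have : i ≤ N := by simpa [Nat.lt_succ_iff] using hi
      omega
    simp [zero_pow (by omega : N - i ≠ 0)]

lemma bern_sc (N : ℕ) (a : ℝ) (c : ℕ → ℝ) (hc : ∀ i, i ≤ N → 0 ≤ c i)
    (hac : c 0 ≤ a) :
    SingleCrossing (bern N (fun i => if i = 0 then a else 0)) (bern N c) := by
  set e : ℕ → ℝ := fun i => (if i = 0 then a else 0) - c i with he_def
  have hfg : ∀ φ, bern N (fun i => if i = 0 then a else 0) φ - bern N c φ = bern N e φ := by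
    intro φ
    unfold bern
    rw [← Finset.sum_sub_distrib]
    apply Finset.sum_congr rfl
    intro i _
    simp only [he_def]
    ring
  have he : ∀ i, 1 ≤ i → i ≤ N → e i ≤ 0 := by
    intro i h1 h2
    have : 0 ≤ c i := hc i h2
    simp only [he_def, if_neg (by omega : ¬ i = 0)]
    linarith
  set S : Set ℝ := insert (0:ℝ) {x | x ∈ Set.Ico (0:ℝ) 1 ∧ 0 ≤ bern N e x} with hS_def
  have hSne : S.Nonempty := ⟨0, Set.mem_insert 0 _⟩
  have hSbdd : BddAbove S := by
    refine ⟨1, fun x hx => ?_⟩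
    rcases hx with rfl | ⟨⟨_, hx1⟩, _⟩
    · norm_num
    · linarith
  set φ₀ := sSup S with hφ₀
  have hφ₀0 : 0 ≤ φ₀ := le_csSup hSbdd (Set.mem_insert 0 _)
  have hφ₀1 : φ₀ ≤ 1 := by
    apply csSup_le hSne
    intro x hx
    rcases hx with rfl | ⟨⟨_, hx1⟩, _⟩
    · norm_num
    · linarith
  refine ⟨φ₀, ⟨hφ₀0, hφ₀1⟩, ?_, ?_⟩
  · intro φ hφ
    obtain ⟨hφ0, hφlt⟩ := hφ
    obtain ⟨φ₁, hφ₁S, hlt⟩ := exists_lt_of_lt_csSup hSne hφlt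
    have hφ₁ : φ₁ ∈ Set.Ico (0:ℝ) 1 ∧ 0 ≤ bern N e φ₁ := by
      rcases hφ₁S with rfl | h
      · linarith
      · exact h
    have hstep := bern_step N e he hφ0 (le_of_lt hlt) hφ₁.1.2
    have h1 : 0 ≤ bern N e φ₁ * (1-φ)^N := by
      apply mul_nonneg hφ₁.2
      apply pow_nonneg
      linarith
    have hpos : 0 < (1-φ₁)^N := by
      apply pow_pos
      have : φ₁ < 1 := hφ₁.1.2
      linarith
    have h2 : 0 ≤ bern N e φ := by
      by_contra hcon
      push_neg at hcon
      nlinarith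
    have := hfg φ
    linarith
  · intro φ hφ
    obtain ⟨hφgt, hφ1⟩ := hφ
    rcases lt_or_eq_of_le hφ1 with hφlt | rfl
    · have h2 : bern N e φ ≤ 0 := by
        by_contra hcon
        push_neg at hcon
        have : φ ∈ S := Set.mem_insert_iff.mpr (Or.inr ⟨⟨by linarith, hφlt⟩, le_of_lt hcon⟩)
        have : φ ≤ φ₀ := le_csSup hSbdd this
        linarith
      have := hfg φ
      linarith
    · -- φ = 1
      rcases Nat.eq_zero_or_pos N with hN | hN
      · -- N = 0 : bern N e is the constant a - c 0 ≥ 0, and φ₀ = 1, contradiction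
        exfalso
        subst hN
        have hmem : ((φ₀+1)/2 : ℝ) ∈ S := by
          refine Set.mem_insert_iff.mpr (Or.inr ⟨⟨by linarith, by linarith⟩, ?_⟩)
          unfold bern
          simp [he_def]
          linarith
        have := le_csSup hSbdd hmem
        linarith
      · have h1 : bern N e 1 = e N := bern_one N e
        have h2 : e N ≤ 0 := he N hN le_rfl
        have := hfg 1
        linarith

lemma interim_eq_bern (N : ℕ) (w : ℕ → ℝ) :
    interimAlloc (N+2) w = bern (N+1) (fun i => w (i+1)) := by
  funext φ
  unfold interimAlloc bern
  rw [← Finset.Ico_add_one_right_eq_Icc, Finset.sum_Ico_eq_sum_range]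
  apply Finset.sum_congr (by norm_num)
  intro i _
  have e1 : 1 + i - 1 = i := by omega
  have e2 : (N+2) - (1+i) = (N+1) - i := by omega
  have e3 : (N+2) - 1 = N+1 := by omega
  have e4 : 1 + i = i + 1 := by omega
  rw [e1, e2, e3, e4]

lemma bern_neg_sub (N : ℕ) (c : ℕ → ℝ) (φ : ℝ) :
    bern N (fun i => c i - c (i+1)) φ = - bern N (fun i => c (i+1) - c i) φ := by
  unfold bern
  rw [← Finset.sum_neg_distrib]
  apply Finset.sum_congr rfl
  intro i _
  ring

lemma sc_const_mul {F G : ℝ → ℝ} (r : ℝ) (hr : 0 ≤ r) (h : SingleCrossing F G) :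
    SingleCrossing (fun φ => r * F φ) (fun φ => r * G φ) := by
  obtain ⟨φ₀, hmem, h1, h2⟩ := h
  exact ⟨φ₀, hmem, fun φ hφ => mul_le_mul_of_nonneg_left (h1 φ hφ) hr,
    fun φ hφ => mul_le_mul_of_nonneg_left (h2 φ hφ) hr⟩

lemma neg_deriv_bern (N : ℕ) (c : ℕ → ℝ) :
    (fun φ => -(deriv (bern (N+1) c) φ))
      = fun φ => ((N:ℝ)+1) * bern N (fun i => c i - c (i+1)) φ := by
  funext φ
  rw [(bern_hasDerivAt N c φ).deriv, bern_neg_sub]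
  ring

/-- The crux of Theorem 6 of the paper: the winner-take-all interim allocation
single-crossing-dominates that of any prize structure with total prize at most
`T`. -/
theorem winner_take_all_single_cross_dominates
    (n : ℕ) (hn : 2 ≤ n) (T : ℝ) (hT : 0 < T) (w' : ℕ → ℝ)
    (hw' : IsPrizeStructure n w') (hsum : ∑ k ∈ Finset.Icc 1 n, w' k ≤ T) :
    SingleCrossDominates (interimAlloc n (winnerTakeAll T)) (interimAlloc n w') := by
  obtain ⟨N, rfl⟩ : ∃ N, n = N + 2 := ⟨n - 2, by omega⟩
  have anti : ∀ b a : ℕ, 1 ≤ a → a ≤ b → b ≤ N+2 → w' b ≤ w' a := by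
    intro b
    induction b with
    | zero => intro a h1 h2 h3; omega
    | succ m ih =>
      intro a h1 h2 h3
      rcases eq_or_lt_of_le h2 with rfl | hlt
      · exact le_refl _
      · have h5 : w' (m+1) ≤ w' m := hw'.1 m (by omega) (by omega)
        exact le_trans h5 (ih a h1 (by omega) (by omega))
  have nonneg : ∀ k, 1 ≤ k → k ≤ N+2 → 0 ≤ w' k :=
    fun k h1 h2 => le_trans hw'.2 (anti (N+2) k h1 h2 le_rfl)
  have hw1T : w' 1 ≤ T := by
    refine le_trans ?_ hsum
    apply Finset.single_le_sum (f := w')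
    · intro k hk
      obtain ⟨hk1, hk2⟩ := Finset.mem_Icc.mp hk
      exact nonneg k hk1 hk2
    · exact Finset.mem_Icc.mpr ⟨le_rfl, by omega⟩
  have hcf : (fun i => winnerTakeAll T (i+1)) = (fun i : ℕ => if i = 0 then T else 0) := by
    funext i
    unfold winnerTakeAll
    rcases Nat.eq_zero_or_pos i with rfl | hi
    · simp
    · rw [if_neg (by omega), if_neg (by omega)]
  have hfb : interimAlloc (N+2) (winnerTakeAll T)
      = bern (N+1) (fun i : ℕ => if i = 0 then T else 0) := by
    rw [interim_eq_bern, hcf]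
  have hgb : interimAlloc (N+2) w' = bern (N+1) (fun i => w' (i+1)) :=
    interim_eq_bern N w'
  have hsum' : (∑ i ∈ Finset.range (N+2), w' (i+1)) ≤ T := by
    rw [← Finset.Ico_add_one_right_eq_Icc, Finset.sum_Ico_eq_sum_range] at hsum
    have : N + 2 + 1 - 1 = N + 2 := by omega
    rw [this] at hsum
    simpa [Nat.add_comm] using hsum
  refine ⟨?_, ?_, ?_⟩
  · -- integrals
    rw [hfb, hgb, bern_integral, bern_integral]
    have h1 : (∑ i ∈ Finset.range (N+1+1), (fun i : ℕ => if i = 0 then T else 0) i) = T := by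
      rw [Finset.sum_ite_eq' (Finset.range (N+2)) 0 (fun _ => T)]
      simp
    rw [h1]
    gcongr
  · -- single crossing of allocations
    rw [hfb, hgb]
    apply bern_sc (N+1) T (fun i => w' (i+1))
    · intro i hi
      exact nonneg (i+1) (by omega) (by omega)
    · exact hw1T
  · -- single crossing of negated derivatives
    rw [hfb, hgb, neg_deriv_bern, neg_deriv_bern]
    have hδf : (fun i : ℕ => (if i = 0 then T else 0) - (if i + 1 = 0 then T else 0))
        = (fun i : ℕ => if i = 0 then T else 0) := by
      funext i
      rw [if_neg (by omega : ¬ i + 1 = 0), sub_zero]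
    have h := bern_sc N T (fun i => w' (i+1) - w' (i+2))
      (fun i hi => by
        show 0 ≤ w' (i+1) - w' (i+2)
        have h := hw'.1 (i+1) (by omega) (by omega)
        have e : i + 1 + 1 = i + 2 := by omega
        rw [e] at h
        linarith)
      (by
        show w' (0+1) - w' (0+2) ≤ T
        have h2 : 0 ≤ w' 2 := nonneg 2 (by omega) (by omega)
        norm_num
        linarith)
    have hδg : (fun i : ℕ => w' (i+1) - w' (i+1+1)) = (fun i : ℕ => w' (i+1) - w' (i+2)) := by
      funext i; norm_num
    rw [hδf, hδg]
    exact sc_const_mul ((N:ℝ)+1) (by positivity) h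
end

section
/- Let f, g : [0,1] → ℝ be integrable functions such that f is single-crossing with respect to g and ∫_0^1 φ f(φ) dφ ≥ ∫_0^1 φ g(φ) dφ. Then for every t ∈ [0,1], ∫_0^t φ f(φ) dφ ≥ ∫_0^t φ g(φ) dφ. -/
/-- Claim 14 in the proof of Theorem 5 of the paper, in abstract form: if `f` is
single-crossing w.r.t. `g` and `∫_0^1 φ f(φ) dφ ≥ ∫_0^1 φ g(φ) dφ`, then
`∫_0^t φ f(φ) dφ ≥ ∫_0^t φ g(φ) dφ` for all `t ∈ [0,1]`. -/
theorem partial_moment_comparison_of_single_crossing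
    (f g : ℝ → ℝ)
    (hf : IntervalIntegrable f MeasureTheory.volume 0 1)
    (hg : IntervalIntegrable g MeasureTheory.volume 0 1)
    (hsc : SingleCrossing f g)
    (hint : (∫ φ in (0:ℝ)..1, φ * g φ) ≤ ∫ φ in (0:ℝ)..1, φ * f φ)
    (t : ℝ) (ht : t ∈ Set.Icc (0:ℝ) 1) :
    (∫ φ in (0:ℝ)..t, φ * g φ) ≤ ∫ φ in (0:ℝ)..t, φ * f φ := by
  obtain ⟨ht0, ht1⟩ := ht
  obtain ⟨φ₀, ⟨hφ0, hφ1⟩, hlo, hhi⟩ := hsc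
  have hF : IntervalIntegrable (fun φ => φ * f φ) MeasureTheory.volume 0 1 :=
    hf.continuousOn_mul continuousOn_id
  have hG : IntervalIntegrable (fun φ => φ * g φ) MeasureTheory.volume 0 1 :=
    hg.continuousOn_mul continuousOn_id
  have hsub : ∀ a b : ℝ, a ∈ Set.Icc (0:ℝ) 1 → b ∈ Set.Icc (0:ℝ) 1 →
      IntervalIntegrable (fun φ => φ * f φ) MeasureTheory.volume a b ∧
      IntervalIntegrable (fun φ => φ * g φ) MeasureTheory.volume a b := by
    intro a b ha hb
    have hss : Set.uIcc a b ⊆ Set.uIcc (0:ℝ) 1 :=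
      Set.uIcc_subset_uIcc (Set.mem_uIcc.2 (Or.inl ha)) (Set.mem_uIcc.2 (Or.inl hb))
    exact ⟨hF.mono_set hss, hG.mono_set hss⟩
  rcases le_or_gt t φ₀ with hcase | hcase
  · -- t ≤ φ₀ : pointwise a.e. comparison on [0, t]
    have hFt := (hsub 0 t (Set.left_mem_Icc.2 zero_le_one) ⟨ht0, ht1⟩).1
    have hGt := (hsub 0 t (Set.left_mem_Icc.2 zero_le_one) ⟨ht0, ht1⟩).2
    refine intervalIntegral.integral_mono_ae_restrict ht0 hGt hFt ?_
    have hnull : (MeasureTheory.volume.restrict (Set.Icc (0:ℝ) t)) {φ₀} = 0 :=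
      le_antisymm (le_trans (MeasureTheory.Measure.restrict_le_self _)
        (by simp)) zero_le
    filter_upwards [MeasureTheory.measure_eq_zero_iff_ae_notMem.1 hnull,
      MeasureTheory.ae_restrict_mem measurableSet_Icc] with φ hne hmem
    have hφlt : φ < φ₀ := lt_of_le_of_ne (le_trans hmem.2 hcase) (by simpa using hne)
    have := hlo φ ⟨hmem.1, hφlt⟩
    exact mul_le_mul_of_nonneg_left this hmem.1
  · -- φ₀ < t : use the full integral and compare on [t, 1]
    have hFt1 := (hsub t 1 ⟨ht0, ht1⟩ (Set.right_mem_Icc.2 zero_le_one)).1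
    have hGt1 := (hsub t 1 ⟨ht0, ht1⟩ (Set.right_mem_Icc.2 zero_le_one)).2
    have hF0t := (hsub 0 t (Set.left_mem_Icc.2 zero_le_one) ⟨ht0, ht1⟩).1
    have hG0t := (hsub 0 t (Set.left_mem_Icc.2 zero_le_one) ⟨ht0, ht1⟩).2
    have hsplitF : (∫ φ in (0:ℝ)..t, φ * f φ) + (∫ φ in t..1, φ * f φ)
        = ∫ φ in (0:ℝ)..1, φ * f φ :=
      intervalIntegral.integral_add_adjacent_intervals hF0t hFt1
    have hsplitG : (∫ φ in (0:ℝ)..t, φ * g φ) + (∫ φ in t..1, φ * g φ)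
        = ∫ φ in (0:ℝ)..1, φ * g φ :=
      intervalIntegral.integral_add_adjacent_intervals hG0t hGt1
    have htail : (∫ φ in t..1, φ * f φ) ≤ ∫ φ in t..1, φ * g φ := by
      refine intervalIntegral.integral_mono_on ht1 hFt1 hGt1 ?_
      intro φ hφ
      have := hhi φ ⟨lt_of_lt_of_le hcase hφ.1, hφ.2⟩
      exact mul_le_mul_of_nonneg_left this (le_trans ht0 hφ.1)
    linarith
end

section
/- Let x, x̃ : [0,1] → [0,∞) be continuous nonincreasing functions such that x is single-crossing with respect to x̃ and ∫_0^1 x(φ) dφ ≥ ∫_0^1 x̃(φ) dφ. Then for every X ≥ 0, ∫_X^∞ x^{-1}(t) dt ≥ ∫_X^∞ x̃^{-1}(t) dt, where x^{-1}(t) := sup{φ ∈ [0,1] : x(φ) ≥ t} (with sup ∅ = 0) is the generalized inverse; both integrals are finite since x^{-1}(t) = 0 for t > x(0). -/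
/-- The generalized inverse of a nonincreasing function on `[0,1]`:
`x^{-1}(t) := sup {φ ∈ [0,1] : x(φ) ≥ t}`, with the convention `sup ∅ = 0`. -/
noncomputable def genInv (x : ℝ → ℝ) (t : ℝ) : ℝ :=
  sSup {φ | φ ∈ Set.Icc (0:ℝ) 1 ∧ t ≤ x φ}

open MeasureTheory Set

lemma genInv_nonneg (x : ℝ → ℝ) (t : ℝ) : 0 ≤ genInv x t := by
  unfold genInv
  rcases Set.eq_empty_or_nonempty {φ | φ ∈ Set.Icc (0:ℝ) 1 ∧ t ≤ x φ} with h | h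
  · rw [h, Real.sSup_empty]
  · obtain ⟨φ, hφ⟩ := h
    exact le_trans hφ.1.1 (le_csSup ⟨1, fun ψ hψ => hψ.1.2⟩ hφ)

lemma genInv_antitone (x : ℝ → ℝ) : Antitone (genInv x) := by
  intro s t hst
  rcases Set.eq_empty_or_nonempty {φ | φ ∈ Set.Icc (0:ℝ) 1 ∧ t ≤ x φ} with h | h
  · rw [genInv, h, Real.sSup_empty]; exact genInv_nonneg x s
  · exact csSup_le_csSup ⟨1, fun ψ hψ => hψ.1.2⟩ h
      (fun φ hφ => ⟨hφ.1, le_trans hst hφ.2⟩)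

lemma measure_setOf_le (x : ℝ → ℝ) (hxc : ContinuousOn x (Icc 0 1))
    (hxa : AntitoneOn x (Icc 0 1)) (t : ℝ) :
    volume {φ | φ ∈ Icc (0:ℝ) 1 ∧ t ≤ x φ} = ENNReal.ofReal (genInv x t) := by
  have hSeq' : {φ | φ ∈ Icc (0:ℝ) 1 ∧ t ≤ x φ} = Icc (0:ℝ) 1 ∩ x ⁻¹' (Ici t) := by
    ext φ; simp [Set.mem_setOf_eq, Set.mem_preimage, Set.mem_Ici, and_comm]
  have hclosed : IsClosed {φ | φ ∈ Icc (0:ℝ) 1 ∧ t ≤ x φ} := by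
    rw [hSeq']; exact hxc.preimage_isClosed_of_isClosed isClosed_Icc isClosed_Ici
  rcases Set.eq_empty_or_nonempty {φ | φ ∈ Icc (0:ℝ) 1 ∧ t ≤ x φ} with h | h
  · rw [h, genInv, h, Real.sSup_empty]; simp
  · have hbdd : BddAbove {φ | φ ∈ Icc (0:ℝ) 1 ∧ t ≤ x φ} := ⟨1, fun ψ hψ => hψ.1.2⟩
    have hmem : sSup {φ | φ ∈ Icc (0:ℝ) 1 ∧ t ≤ x φ} ∈ {φ | φ ∈ Icc (0:ℝ) 1 ∧ t ≤ x φ} :=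
      hclosed.csSup_mem h hbdd
    have hSeq : {φ | φ ∈ Icc (0:ℝ) 1 ∧ t ≤ x φ}
        = Icc 0 (sSup {φ | φ ∈ Icc (0:ℝ) 1 ∧ t ≤ x φ}) := by
      apply Subset.antisymm
      · intro φ hφ; exact ⟨hφ.1.1, le_csSup hbdd hφ⟩
      · intro ψ hψ
        have hψ1 : ψ ∈ Icc (0:ℝ) 1 := ⟨hψ.1, le_trans hψ.2 hmem.1.2⟩
        exact ⟨hψ1, le_trans hmem.2 (hxa hψ1 hmem.1 hψ.2)⟩
    rw [genInv]
    conv_lhs => rw [hSeq]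
    rw [Real.volume_Icc, sub_zero]

/-- Continuous extension of `x` beyond `[0,1]` by clamping. -/
noncomputable def clampF (x : ℝ → ℝ) : ℝ → ℝ := fun φ => x (max 0 (min φ 1))

lemma clampF_cont {x : ℝ → ℝ} (hxc : ContinuousOn x (Icc 0 1)) : Continuous (clampF x) :=
  hxc.comp_continuous (continuous_const.max (continuous_id.min continuous_const))
    (fun φ => ⟨le_max_left _ _, max_le (by norm_num) (min_le_right _ _)⟩)

lemma clampF_eq {x : ℝ → ℝ} {φ : ℝ} (hφ : φ ∈ Icc (0:ℝ) 1) : clampF x φ = x φ := by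
  unfold clampF; rw [min_eq_left hφ.2, max_eq_right hφ.1]

/-- Layer-cake identity for the generalized inverse. -/
lemma layer (x : ℝ → ℝ) (hxc : ContinuousOn x (Icc 0 1)) (hxa : AntitoneOn x (Icc 0 1))
    (X : ℝ) (hX : 0 ≤ X) :
    ∫ t in Ioi X, genInv x t = ∫ φ in Icc (0:ℝ) 1, max (x φ - X) 0 := by
  set g : ℝ → ℝ := fun φ => max (clampF x φ - X) 0 with hg
  have hgc : Continuous g := ((clampF_cont hxc).sub continuous_const).max continuous_const
  have hR : (∫ φ in Icc (0:ℝ) 1, max (x φ - X) 0)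
      = (∫⁻ φ in Icc (0:ℝ) 1, ENNReal.ofReal (g φ)).toReal := by
    rw [show (∫ φ in Icc (0:ℝ) 1, max (x φ - X) 0) = ∫ φ in Icc (0:ℝ) 1, g φ from
      setIntegral_congr_fun measurableSet_Icc (fun φ hφ => by
        simp only [hg]; rw [clampF_eq hφ])]
    exact integral_eq_lintegral_of_nonneg_ae (ae_of_all _ fun φ => le_max_right _ _)
      hgc.aestronglyMeasurable.restrict
  have hL : (∫ t in Ioi X, genInv x t)
      = (∫⁻ t in Ioi X, ENNReal.ofReal (genInv x t)).toReal :=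
    integral_eq_lintegral_of_nonneg_ae (ae_of_all _ fun t => genInv_nonneg x t)
      (genInv_antitone x).measurable.aestronglyMeasurable.restrict
  have key : (∫⁻ φ in Icc (0:ℝ) 1, ENNReal.ofReal (g φ))
      = ∫⁻ t in Ioi X, ENNReal.ofReal (genInv x t) := by
    have step1 : (∫⁻ φ in Icc (0:ℝ) 1, ENNReal.ofReal (g φ))
        = ∫⁻ t in Ioi (0:ℝ), (volume.restrict (Icc 0 1)) {a | t ≤ g a} :=
      lintegral_eq_lintegral_meas_le (volume.restrict (Icc 0 1))
        (ae_of_all _ fun φ => le_max_right _ _) hgc.aemeasurable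
    rw [step1]
    have h1 : ∀ᵐ t ∂volume, t ∈ Ioi (0:ℝ) →
        (volume.restrict (Icc 0 1)) {a | t ≤ g a} = ENNReal.ofReal (genInv x (t + X)) := by
      refine ae_of_all _ fun t ht => ?_
      have hms : MeasurableSet {a | t ≤ g a} := (isClosed_le continuous_const hgc).measurableSet
      rw [Measure.restrict_apply hms]
      have hseteq : {a | t ≤ g a} ∩ Icc 0 1 = {φ | φ ∈ Icc (0:ℝ) 1 ∧ t + X ≤ x φ} := by
        ext φ
        simp only [Set.mem_inter_iff, Set.mem_setOf_eq]
        constructor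
        · rintro ⟨h1, h2⟩
          refine ⟨h2, ?_⟩
          simp only [hg] at h1
          rw [clampF_eq h2] at h1
          rcases le_max_iff.1 h1 with h | h
          · linarith
          · exact absurd h (not_le.2 ht)
        · rintro ⟨h1, h2⟩
          refine ⟨?_, h1⟩
          simp only [hg]
          rw [clampF_eq h1]
          exact le_max_of_le_left (by linarith)
      rw [hseteq, measure_setOf_le x hxc hxa (t + X)]
    rw [setLIntegral_congr_fun_ae measurableSet_Ioi h1]
    -- translation
    set F : ℝ → ENNReal := (Ioi X).indicator (fun t => ENNReal.ofReal (genInv x t)) with hF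
    have hshift : ∀ t : ℝ, F (t + X)
        = (Ioi (0:ℝ)).indicator (fun t => ENNReal.ofReal (genInv x (t + X))) t := by
      intro t
      simp only [hF, Set.indicator_apply, Set.mem_Ioi, lt_add_iff_pos_left]
    calc (∫⁻ t in Ioi (0:ℝ), ENNReal.ofReal (genInv x (t + X)))
        = ∫⁻ t, (Ioi (0:ℝ)).indicator (fun t => ENNReal.ofReal (genInv x (t + X))) t :=
          (lintegral_indicator measurableSet_Ioi _).symm
      _ = ∫⁻ t, F (t + X) := by simp_rw [hshift]
      _ = ∫⁻ t, F t := lintegral_add_right_eq_self F X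
      _ = ∫⁻ t in Ioi X, ENNReal.ofReal (genInv x t) := lintegral_indicator measurableSet_Ioi _
  rw [hL, hR, key]

/-- The truncated-integral comparison on `[0,1]`. -/
lemma trunc_mono (x xt : ℝ → ℝ)
    (hxc : ContinuousOn x (Set.Icc 0 1)) (hxa : AntitoneOn x (Set.Icc 0 1))
    (hxtc : ContinuousOn xt (Set.Icc 0 1)) (hxta : AntitoneOn xt (Set.Icc 0 1))
    (hsc : SingleCrossing x xt)
    (hint : (∫ φ in Icc (0:ℝ) 1, xt φ) ≤ ∫ φ in Icc (0:ℝ) 1, x φ)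
    (X : ℝ) :
    (∫ φ in Icc (0:ℝ) 1, max (xt φ - X) 0) ≤ ∫ φ in Icc (0:ℝ) 1, max (x φ - X) 0 := by
  obtain ⟨φ₀, hφ₀, hlo, hhi⟩ := hsc
  have ix : IntegrableOn (fun φ => max (x φ - X) 0) (Icc (0:ℝ) 1) :=
    ((hxc.sub continuousOn_const).sup continuousOn_const).integrableOn_Icc
  have ixt : IntegrableOn (fun φ => max (xt φ - X) 0) (Icc (0:ℝ) 1) :=
    ((hxtc.sub continuousOn_const).sup continuousOn_const).integrableOn_Icc
  by_cases hc : xt φ₀ ≤ X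
  · refine setIntegral_mono_on ixt ix measurableSet_Icc fun φ hφ => ?_
    rcases lt_or_ge φ φ₀ with h | h
    · exact max_le_max (sub_le_sub_right (hlo φ ⟨hφ.1, h⟩) X) le_rfl
    · have : xt φ ≤ X := le_trans (hxta hφ₀ hφ h) hc
      rw [max_eq_right (sub_nonpos.2 this)]
      exact le_max_right _ _
  · push_neg at hc
    have hpt : ∀ φ ∈ Icc (0:ℝ) 1,
        max (xt φ - X) 0 + (x φ - xt φ) ≤ max (x φ - X) 0 := by
      intro φ hφ
      rcases lt_or_ge φ φ₀ with h | h
      · have hXxt : X ≤ xt φ := le_trans hc.le (hxta hφ hφ₀ h.le)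
        have hxx : xt φ ≤ x φ := hlo φ ⟨hφ.1, h⟩
        rw [max_eq_left (sub_nonneg.2 hXxt),
          max_eq_left (sub_nonneg.2 (le_trans hXxt hxx))]
        linarith
      · rcases le_total X (xt φ) with hX1 | hX1
        · rw [max_eq_left (sub_nonneg.2 hX1)]
          calc xt φ - X + (x φ - xt φ) = x φ - X := by ring
            _ ≤ max (x φ - X) 0 := le_max_left _ _
        · have hne : φ₀ < φ :=
            lt_of_le_of_ne h (fun e => absurd (e ▸ hX1) (not_le.2 hc))
          have hxx : x φ ≤ xt φ := hhi φ ⟨hne, hφ.2⟩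
          rw [max_eq_right (sub_nonpos.2 hX1)]
          calc 0 + (x φ - xt φ) ≤ 0 := by linarith
            _ ≤ max (x φ - X) 0 := le_max_right _ _
    have isub : IntegrableOn (fun φ => x φ - xt φ) (Icc (0:ℝ) 1) :=
      (hxc.sub hxtc).integrableOn_Icc
    have iadd : IntegrableOn (fun φ => max (xt φ - X) 0 + (x φ - xt φ)) (Icc (0:ℝ) 1) :=
      ixt.add isub
    have hmono := setIntegral_mono_on iadd ix measurableSet_Icc hpt
    rw [integral_add ixt isub] at hmono
    have hdiff : (0:ℝ) ≤ ∫ φ in Icc (0:ℝ) 1, (x φ - xt φ) := by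
      rw [integral_sub hxc.integrableOn_Icc hxtc.integrableOn_Icc]
      linarith
    linarith

/-- Claim 15 in the proof of Theorem 5 of the paper: tail-integral comparison of
generalized inverses under single-crossing and integral dominance. -/
theorem tail_integral_comparison_of_generalized_inverses
    (x xt : ℝ → ℝ)
    (hxc : ContinuousOn x (Set.Icc 0 1)) (hxa : AntitoneOn x (Set.Icc 0 1))
    (hxnn : ∀ φ ∈ Set.Icc (0:ℝ) 1, 0 ≤ x φ)
    (hxtc : ContinuousOn xt (Set.Icc 0 1)) (hxta : AntitoneOn xt (Set.Icc 0 1))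
    (hxtnn : ∀ φ ∈ Set.Icc (0:ℝ) 1, 0 ≤ xt φ)
    (hsc : SingleCrossing x xt)
    (hint : (∫ φ in (0:ℝ)..1, xt φ) ≤ ∫ φ in (0:ℝ)..1, x φ)
    (X : ℝ) (hX : 0 ≤ X) :
    (∫ t in Set.Ioi X, genInv xt t) ≤ ∫ t in Set.Ioi X, genInv x t := by
  rw [layer x hxc hxa X hX, layer xt hxtc hxta X hX]
  refine trunc_mono x xt hxc hxa hxtc hxta hsc ?_ X
  rw [intervalIntegral.integral_of_le zero_le_one, intervalIntegral.integral_of_le zero_le_one]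
    at hint
  rw [integral_Icc_eq_integral_Ioc, integral_Icc_eq_integral_Ioc]
  exact hint
end

section
/- Let v : [0,1] → [0,∞) be nonincreasing, let x : [0,1] → ℝ be continuously differentiable and nonincreasing, and let Φ : [0,1] → [0,1] be continuously differentiable and nondecreasing. Define the effort strategy β(q) := ∫_q^1 v(t) · (−x'(Φ(t))) · Φ'(t) dt. Then for all q, q' ∈ [0,1]: v(q) · x(Φ(q)) − β(q) ≥ v(q) · x(Φ(q')) − β(q'). (Incentive compatibility of the equilibrium effort strategy: a contestant with skill v(q) weakly prefers her own prescribed effort β(q) to mimicking any other quantile q'; this is the key inequality in the proof of Lemma 2 of the paper, via v(q)(x(Φ(q)) − x(Φ(q'))) − β(q) + β(q') = ∫_{q'}^{q} (v(t) − v(q)) (−x'(Φ(t))) Φ'(t) dt ≥ 0.) -/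
open Set MeasureTheory intervalIntegral Topology Filter

/-- If `f` is antitone on `Icc 0 1` and has derivative `d` within `Icc 0 1` at a point
of `Icc 0 1`, then `d ≤ 0`. -/
lemma antitoneOn_hasDerivWithinAt_nonpos {f : ℝ → ℝ} {d s : ℝ}
    (hf : AntitoneOn f (Set.Icc 0 1)) (hs : s ∈ Set.Icc (0:ℝ) 1)
    (h : HasDerivWithinAt f d (Set.Icc 0 1) s) : d ≤ 0 := by
  rw [hasDerivWithinAt_iff_tendsto_slope] at h
  have hne : (𝓝[Set.Icc (0:ℝ) 1 \ {s}] s).NeBot := by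
    rcases lt_or_eq_of_le hs.2 with h1 | h1
    · exact (left_nhdsWithin_Ioo_neBot h1).mono
        (nhdsWithin_mono _ (fun y hy => ⟨⟨le_trans hs.1 hy.1.le, hy.2.le⟩,
          Set.mem_singleton_iff.not.mpr (ne_of_gt hy.1)⟩))
    · subst h1
      exact (right_nhdsWithin_Ioo_neBot (show (0:ℝ) < 1 by norm_num)).mono
        (nhdsWithin_mono _ (fun y hy => ⟨⟨hy.1.le, hy.2.le⟩,
          Set.mem_singleton_iff.not.mpr (ne_of_lt hy.2)⟩))
  refine le_of_tendsto h ?_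
  filter_upwards [self_mem_nhdsWithin] with y hy
  rcases hy with ⟨hy1, hy2⟩
  have hys : y ≠ s := hy2
  rcases lt_or_gt_of_ne hys with hlt | hgt
  · have : f s ≤ f y := hf hy1 hs hlt.le
    have hds : y - s < 0 := by linarith
    rw [slope_def_field]
    exact div_nonpos_of_nonneg_of_nonpos (by linarith) hds.le
  · have : f y ≤ f s := hf hs hy1 hgt.le
    have hds : 0 < y - s := by linarith
    rw [slope_def_field]
    exact div_nonpos_of_nonpos_of_nonneg (by linarith) hds.le

/-- If `f` is monotone on `Icc 0 1` and has derivative `d` within `Icc 0 1` at a point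
of `Icc 0 1`, then `0 ≤ d`. -/
lemma monotoneOn_hasDerivWithinAt_nonneg {f : ℝ → ℝ} {d s : ℝ}
    (hf : MonotoneOn f (Set.Icc 0 1)) (hs : s ∈ Set.Icc (0:ℝ) 1)
    (h : HasDerivWithinAt f d (Set.Icc 0 1) s) : 0 ≤ d := by
  have := antitoneOn_hasDerivWithinAt_nonpos (f := fun t => -(f t)) (d := -d)
    (fun a ha b hb hab => neg_le_neg (hf ha hb hab)) hs h.neg
  linarith

/-- Incentive compatibility of the equilibrium effort strategy (key inequality
in the proof of Lemma 2 of the paper): with nonincreasing skill quantile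
function `v`, nonincreasing continuously differentiable interim allocation `x`
(with derivative `x'` on `[0,1]`), nondecreasing continuously differentiable
cumulative choice component `Φ` (with derivative `Φ'` on `[0,1]`) mapping
`[0,1]` into `[0,1]`, and effort strategy
`β(q) = ∫_q^1 v(t) (−x'(Φ(t))) Φ'(t) dt`, a contestant with quantile `q` weakly
prefers her own prescribed effort to mimicking any other quantile `q'`:
`v(q) x(Φ(q)) − β(q) ≥ v(q) x(Φ(q')) − β(q')`. -/
theorem effort_strategy_incentive_compatible
    (v x Φ x' Φ' β : ℝ → ℝ)
    (hv : AntitoneOn v (Set.Icc 0 1)) (hvnn : ∀ t ∈ Set.Icc (0:ℝ) 1, 0 ≤ v t)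
    (hx : ∀ t ∈ Set.Icc (0:ℝ) 1, HasDerivWithinAt x (x' t) (Set.Icc 0 1) t)
    (hx'c : ContinuousOn x' (Set.Icc 0 1))
    (hxa : AntitoneOn x (Set.Icc 0 1))
    (hΦ : ∀ t ∈ Set.Icc (0:ℝ) 1, HasDerivWithinAt Φ (Φ' t) (Set.Icc 0 1) t)
    (hΦ'c : ContinuousOn Φ' (Set.Icc 0 1))
    (hΦm : MonotoneOn Φ (Set.Icc 0 1))
    (hΦmap : ∀ t ∈ Set.Icc (0:ℝ) 1, Φ t ∈ Set.Icc (0:ℝ) 1)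
    (hβ : ∀ q, β q = ∫ t in q..1, v t * (-(x' (Φ t))) * Φ' t)
    (q q' : ℝ) (hq : q ∈ Set.Icc (0:ℝ) 1) (hq' : q' ∈ Set.Icc (0:ℝ) 1) :
    v q * x (Φ q') - β q' ≤ v q * x (Φ q) - β q := by
  -- notation for the nonnegative density
  set g : ℝ → ℝ := fun t => -(x' (Φ t)) * Φ' t with hg
  -- continuity of Φ on [0,1]
  have hΦcont : ContinuousOn Φ (Set.Icc 0 1) := fun t ht => (hΦ t ht).continuousWithinAt
  have hΦmaps : Set.MapsTo Φ (Set.Icc (0:ℝ) 1) (Set.Icc (0:ℝ) 1) := fun t ht => hΦmap t ht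
  -- continuity of g on [0,1]
  have hgc : ContinuousOn g (Set.Icc 0 1) :=
    ((hx'c.comp hΦcont hΦmaps).neg).mul hΦ'c
  -- g is nonnegative on [0,1]
  have hg0 : ∀ t ∈ Set.Icc (0:ℝ) 1, 0 ≤ g t := by
    intro t ht
    have h1 : x' (Φ t) ≤ 0 :=
      antitoneOn_hasDerivWithinAt_nonpos hxa (hΦmap t ht) (hx (Φ t) (hΦmap t ht))
    have h2 : 0 ≤ Φ' t := monotoneOn_hasDerivWithinAt_nonneg hΦm ht (hΦ t ht)
    exact mul_nonneg (by linarith) h2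
  -- integrability of v·g on subintervals of [0,1]
  have hvint : IntegrableOn v (Set.Icc (0:ℝ) 1) volume :=
    AntitoneOn.integrableOn_isCompact isCompact_Icc hv
  have hvg_int : IntegrableOn (fun t => v t * g t) (Set.Icc (0:ℝ) 1) volume :=
    hvint.mul_continuousOn hgc isCompact_Icc
  have hIcc : ∀ a b : ℝ, a ∈ Set.Icc (0:ℝ) 1 → b ∈ Set.Icc (0:ℝ) 1 →
      Set.uIcc a b ⊆ Set.Icc (0:ℝ) 1 := fun a b ha hb =>
    Set.uIcc_subset_Icc ha hb
  have hvg_ii : ∀ a b : ℝ, a ∈ Set.Icc (0:ℝ) 1 → b ∈ Set.Icc (0:ℝ) 1 →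
      IntervalIntegrable (fun t => v t * g t) volume a b := by
    intro a b ha hb
    rw [intervalIntegrable_iff]
    exact (hvg_int.mono_set ((Set.uIoc_subset_uIcc).trans (hIcc a b ha hb)))
  have hg_ii : ∀ a b : ℝ, a ∈ Set.Icc (0:ℝ) 1 → b ∈ Set.Icc (0:ℝ) 1 →
      IntervalIntegrable g volume a b := fun a b ha hb =>
    (hgc.mono (hIcc a b ha hb)).intervalIntegrable
  have h1 : (1:ℝ) ∈ Set.Icc (0:ℝ) 1 := by norm_num
  -- rewrite β values; note the integrand is v t * g t
  have hβeq : ∀ r, β r = ∫ t in r..1, v t * g t := by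
    intro r
    rw [hβ r]
    congr 1
    ext t
    simp [hg, mul_assoc]
  -- β q - β q' = ∫ q..q' v·g
  have hβdiff : β q - β q' = ∫ t in q..q', v t * g t := by
    rw [hβeq q, hβeq q']
    have := integral_add_adjacent_intervals (hvg_ii q q' hq hq') (hvg_ii q' 1 hq' h1)
    linarith
  -- FTC for x ∘ Φ on q..q'
  have hxcont : ContinuousOn x (Set.Icc 0 1) := fun t ht => (hx t ht).continuousWithinAt
  have hftc : (∫ t in q..q', x' (Φ t) * Φ' t) = x (Φ q') - x (Φ q) := by
    apply integral_eq_sub_of_hasDeriv_right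
    · exact (hxcont.comp hΦcont hΦmaps).mono (hIcc q q' hq hq')
    · intro t ht
      have ht01 : t ∈ Set.Ioo (0:ℝ) 1 := by
        rcases le_total q q' with h | h
        · simp only [min_eq_left h, max_eq_right h] at ht
          exact ⟨lt_of_le_of_lt hq.1 ht.1, lt_of_lt_of_le ht.2 hq'.2⟩
        · simp only [min_eq_right h, max_eq_left h] at ht
          exact ⟨lt_of_le_of_lt hq'.1 ht.1, lt_of_lt_of_le ht.2 hq.2⟩
      have hmem : Set.Icc (0:ℝ) 1 ∈ nhds t := Icc_mem_nhds ht01.1 ht01.2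
      have hd : HasDerivWithinAt (fun s => x (Φ s)) (x' (Φ t) * Φ' t) (Set.Icc 0 1) t :=
        (hx (Φ t) (hΦmap t (Set.mem_Icc_of_Ioo ht01))).comp t
          (hΦ t (Set.mem_Icc_of_Ioo ht01)) hΦmaps
      exact (hd.hasDerivAt hmem).hasDerivWithinAt
    · exact ((((hx'c.comp hΦcont hΦmaps)).mul hΦ'c).mono (hIcc q q' hq hq')).intervalIntegrable
  -- ∫ q..q' g = x (Φ q) - x (Φ q')
  have hgint : (∫ t in q..q', g t) = x (Φ q) - x (Φ q') := by
    have : (∫ t in q..q', g t) = ∫ t in q..q', -(x' (Φ t) * Φ' t) := by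
      congr 1; ext t; simp [hg, neg_mul]
    rw [this, intervalIntegral.integral_neg, hftc]; ring
  -- key monotone comparison of integrals
  have hkey : (∫ t in q..q', v t * g t) ≤ ∫ t in q..q', v q * g t := by
    have hconst_ii : ∀ a b : ℝ, a ∈ Set.Icc (0:ℝ) 1 → b ∈ Set.Icc (0:ℝ) 1 →
        IntervalIntegrable (fun t => v q * g t) volume a b := fun a b ha hb =>
      ((continuousOn_const.mul hgc).mono (hIcc a b ha hb)).intervalIntegrable
    rcases le_total q q' with hqq | hqq
    · apply integral_mono_on hqq (hvg_ii q q' hq hq') (hconst_ii q q' hq hq')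
      intro t ht
      have ht01 : t ∈ Set.Icc (0:ℝ) 1 := ⟨le_trans hq.1 ht.1, le_trans ht.2 hq'.2⟩
      exact mul_le_mul_of_nonneg_right (hv hq ht01 ht.1) (hg0 t ht01)
    · rw [integral_symm q' q, integral_symm q' q]
      apply neg_le_neg
      apply integral_mono_on hqq (hconst_ii q' q hq' hq) (hvg_ii q' q hq' hq)
      intro t ht
      have ht01 : t ∈ Set.Icc (0:ℝ) 1 := ⟨le_trans hq'.1 ht.1, le_trans ht.2 hq.2⟩
      exact mul_le_mul_of_nonneg_right (hv ht01 hq ht.2) (hg0 t ht01)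
  have hconst_eq : (∫ t in q..q', v q * g t) = v q * (x (Φ q) - x (Φ q')) := by
    rw [intervalIntegral.integral_const_mul, hgint]
  linarith [hβdiff, hkey, hconst_eq]
end

section
/- For every integer n ≥ 2: ξ_{n−1}(1/2) = (1 − 2^{−(n−1)})/(n−1), ξ_n(1/2) = 1/n, and ξ_{n−1}(1/2) ≥ ξ_n(1/2); equivalently, (1 − 2^{−(n−1)})/(n−1) ≥ 1/n. -/
lemma xi_half (n k : ℕ) (hk : k ≤ n) :
    xi n k (1/2) = (1/(k:ℝ)) * (∑ j ∈ Finset.range k, (Nat.choose (n-1) j : ℝ)) * (1/2:ℝ)^(n-1) := by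
  unfold xi
  rw [show Finset.Icc 1 k = Finset.Ico 1 (k+1) by rw [Finset.Ico_add_one_right_eq_Icc],
    Finset.sum_Ico_eq_sum_range]
  have : ∀ j ∈ Finset.range (k+1-1), (Nat.choose (n-1) (1+j-1) : ℝ) * (1/2:ℝ)^(1+j-1) * (1-(1/2:ℝ))^(n-(1+j)) = (Nat.choose (n-1) j : ℝ) * (1/2:ℝ)^(n-1) := by
    intro j hj
    simp only [Finset.mem_range] at hj
    have hj' : j < k := by omega
    have h1 : 1 + j - 1 = j := by omega
    have h2 : (1 - (1/2:ℝ)) = 1/2 := by norm_num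
    rw [h1, h2, mul_assoc, ← pow_add]
    congr 2
    omega
  rw [Finset.sum_congr rfl this]
  rw [← Finset.sum_mul, mul_assoc]
  norm_num

lemma sum_choose_real (m : ℕ) :
    (∑ j ∈ Finset.range (m+1), (Nat.choose m j : ℝ)) = 2^m := by
  rw [← Nat.cast_sum]
  rw [Nat.sum_range_choose]
  push_cast; ring

/-- Key claim in the proof of Theorem 8 of the paper:
`ξ_{n−1}(1/2) = (1 − 2^{−(n−1)})/(n−1)`, `ξ_n(1/2) = 1/n`, and
`ξ_{n−1}(1/2) ≥ ξ_n(1/2)`, i.e. `(1 − 2^{−(n−1)})/(n−1) ≥ 1/n`. -/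
theorem xi_half_comparison (n : ℕ) (hn : 2 ≤ n) :
    xi n (n-1) (1/2) = (1 - ((1:ℝ)/2)^(n-1)) / ((n:ℝ) - 1) ∧
    xi n n (1/2) = 1/(n:ℝ) ∧
    xi n n (1/2) ≤ xi n (n-1) (1/2) ∧
    1/(n:ℝ) ≤ (1 - ((1:ℝ)/2)^(n-1)) / ((n:ℝ) - 1) := by
  obtain ⟨m, rfl⟩ : ∃ m, n = m + 2 := ⟨n - 2, by omega⟩
  set n := m + 2 with hn2
  have hm1 : n - 1 = m + 1 := by omega
  have hpow : (0:ℝ) < 2^(m+1) := by positivity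
  have hsum_full : (∑ j ∈ Finset.range n, (Nat.choose (n-1) j : ℝ)) = 2^(m+1) := by
    rw [hm1]; rw [show n = (m+1)+1 from rfl]; exact sum_choose_real (m+1)
  have hsum_part : (∑ j ∈ Finset.range (n-1), (Nat.choose (n-1) j : ℝ)) = 2^(m+1) - 1 := by
    have : (∑ j ∈ Finset.range n, (Nat.choose (n-1) j : ℝ))
        = (∑ j ∈ Finset.range (n-1), (Nat.choose (n-1) j : ℝ)) + (Nat.choose (n-1) (n-1) : ℝ) := by
      rw [show n = (n-1)+1 from rfl]
      exact Finset.sum_range_succ _ _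
    rw [Nat.choose_self] at this
    rw [hsum_full] at this
    push_cast at this ⊢
    linarith
  have h1 : xi n (n-1) (1/2) = (1 - ((1:ℝ)/2)^(n-1)) / ((n:ℝ) - 1) := by
    rw [xi_half n (n-1) (by omega), hsum_part, hm1]
    have hcast : ((n:ℝ) - 1) = (m:ℝ)+1 := by push_cast [hn2]; ring
    have hne : ((m:ℝ)+1) ≠ 0 := by positivity
    have h2 : ((2:ℝ))^(m+1) ≠ 0 := by positivity
    rw [hcast, div_pow, one_pow, eq_div_iff hne]
    push_cast
    field_simp
  have h2 : xi n n (1/2) = 1/(n:ℝ) := by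
    rw [xi_half n n le_rfl, hsum_full, hm1]
    have hne : ((n:ℝ)) ≠ 0 := by positivity
    rw [div_pow, one_pow]
    field_simp
  have key : 1/(n:ℝ) ≤ (1 - ((1:ℝ)/2)^(n-1)) / ((n:ℝ) - 1) := by
    rw [hm1]
    have hnpos : (0:ℝ) < (n:ℝ) := by positivity
    have hn1pos : (0:ℝ) < (n:ℝ) - 1 := by
      push_cast [hn2]; linarith [Nat.cast_nonneg (α := ℝ) m]
    rw [div_le_div_iff₀ hnpos hn1pos]
    have hb : (n:ℝ) ≤ 2^(m+1) := by
      have : n ≤ 2^(m+1) := by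
        have := Nat.lt_two_pow_self (n := m+1)
        omega
      exact_mod_cast this
    have hhalf : ((1:ℝ)/2)^(m+1) = 1 / 2^(m+1) := by
      rw [div_pow, one_pow]
    rw [hhalf]
    have : (n:ℝ) * (1 / 2^(m+1)) ≤ 1 := by
      rw [mul_one_div, div_le_one hpow]; exact hb
    nlinarith
  exact ⟨h1, h2, by rw [h1, h2]; exact key, key⟩
end
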